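/- arXiv:2405.02001 — 9 statements merged into one kernel-verified Lean document; each statement's English description precedes it below -/
import Mathlib

section
/- Under the assumptions of positivity of p and π and self-adjointness of T on L²_μ, every eigenvalue λ of T (i.e. Tφ = λφ for some nonzero φ ∈ L²_μ) satisfies −1 < λ ≤ 1, and if λ = 1 then φ is (μ-a.e.) constant. -/
open MeasureTheory RealInnerProductSpace ENNReal

/-- For a positive transition density `p` with positive invariant density `π`
and self-adjoint transfer operator `T` on `L²_μ`, every eigenvalue `λ` of `T` satisfies
`-1 < λ ≤ 1`, and if `λ = 1` then the eigenfunction is `μ`-a.e. constant. -/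
theorem transfer_operator_eigenvalue_bounds {d : ℕ}
    (p : (Fin d → ℝ) → (Fin d → ℝ) → ℝ) (π : (Fin d → ℝ) → ℝ)
    (μ : Measure (Fin d → ℝ))
    (hμ : μ = volume.withDensity (fun x => ENNReal.ofReal (π x)))
    (hp_meas : Measurable (Function.uncurry p))
    (hπ_meas : Measurable π)
    (hp_pos : ∀ x y, 0 < p x y)
    (hπ_pos : ∀ x, 0 < π x)
    (hπ_prob : ∫ x, π x = 1)
    (hp_norm : ∀ x, ∫ y, p x y = 1)
    (hp_inv : ∀ y, ∫ x, p x y * π x = π y)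
    (T : Lp ℝ 2 μ →L[ℝ] Lp ℝ 2 μ)
    (hT_kernel : ∀ f : Lp ℝ 2 μ,
      (T f : (Fin d → ℝ) → ℝ) =ᵐ[μ] (fun x => ∫ y, p x y * f y))
    (hT_selfadj : ∀ f g : Lp ℝ 2 μ, ⟪T f, g⟫ = ⟪f, T g⟫)
    (lam : ℝ) (φ : Lp ℝ 2 μ) (hφ : φ ≠ 0)
    (heig : T φ = lam • φ) :
    (-1 < lam ∧ lam ≤ 1) ∧
      (lam = 1 → ∃ c : ℝ, (φ : (Fin d → ℝ) → ℝ) =ᵐ[μ] (fun _ => c)) := by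
  classical
  -- integrability of π
  have hπ_int : Integrable π (volume : Measure (Fin d → ℝ)) := by
    by_contra h
    rw [integral_undef h] at hπ_prob; norm_num at hπ_prob
  have hπ_nn : ∀ x, 0 ≤ π x := fun x => (hπ_pos x).le
  -- μ is a probability measure
  have hμ_univ : μ Set.univ = 1 := by
    rw [hμ, withDensity_apply _ MeasurableSet.univ, setLIntegral_univ,
      ← ofReal_integral_eq_lintegral_ofReal hπ_int (Filter.Eventually.of_forall hπ_nn),
      hπ_prob, ENNReal.ofReal_one]
  haveI hμ_prob : IsProbabilityMeasure μ := ⟨hμ_univ⟩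
  -- absolute continuity both ways
  have hac1 : μ ≪ (volume : Measure (Fin d → ℝ)) := by
    rw [hμ]; exact withDensity_absolutelyContinuous _ _
  have hac2 : (volume : Measure (Fin d → ℝ)) ≪ μ := by
    rw [hμ]
    exact withDensity_absolutelyContinuous'
      (hπ_meas.ennreal_ofReal.aemeasurable)
      (Filter.Eventually.of_forall fun x => (ENNReal.ofReal_pos.mpr (hπ_pos x)).ne')
  -- a measurable representative g of φ
  have hφm : AEStronglyMeasurable (φ : (Fin d → ℝ) → ℝ) (volume : Measure (Fin d → ℝ)) :=
    (Lp.aestronglyMeasurable φ).mono_ac hac2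
  set g : (Fin d → ℝ) → ℝ := hφm.mk _ with hgdef
  have hgm : Measurable g := hφm.stronglyMeasurable_mk.measurable
  have hgv : (φ : (Fin d → ℝ) → ℝ) =ᵐ[volume] g := hφm.ae_eq_mk
  have hgμ : (φ : (Fin d → ℝ) → ℝ) =ᵐ[μ] g := hac1.ae_le hgv
  -- measurable/integrable slices of p
  have hpyx : ∀ x : Fin d → ℝ, Measurable (fun y => p x y) :=
    fun x => hp_meas.of_uncurry_left
  have hpxy : ∀ y : Fin d → ℝ, Measurable (fun x => p x y) :=
    fun y => hp_meas.of_uncurry_right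
  have hp_int : ∀ x : Fin d → ℝ, Integrable (p x) (volume : Measure (Fin d → ℝ)) := by
    intro x
    by_contra h
    have := hp_norm x
    rw [integral_undef h] at this; norm_num at this
  have hpπ_int : ∀ y : Fin d → ℝ, Integrable (fun x => p x y * π x)
      (volume : Measure (Fin d → ℝ)) := by
    intro y
    by_contra h
    have := hp_inv y
    rw [integral_undef h] at this
    exact absurd this.symm (hπ_pos y).ne'
  -- N = ∫ g² dμ
  set N : ℝ := ∫ x, g x ^ 2 ∂μ with hNdef
  have hφ2 : Integrable (fun x => (φ : (Fin d → ℝ) → ℝ) x ^ 2) μ := by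
    have := (Lp.memLp φ).integrable_sq
    simpa [pow_two] using this
  have hg2 : Integrable (fun x => g x ^ 2) μ :=
    hφ2.congr (hgμ.mono fun x hx => by simp only [hx])
  have hNinner : ⟪φ, φ⟫ = N := by
    rw [L2.inner_def, hNdef]
    refine integral_congr_ae (hgμ.mono fun x hx => ?_)
    simp [hx, RCLike.inner_apply, conj_trivial, pow_two]
  have hNpos : 0 < N := by
    rw [← hNinner, real_inner_self_eq_norm_sq]
    have h0 : 0 < ‖φ‖ := norm_pos_iff.mpr hφ
    positivity
  -- the inner product identity : lam * N = ∫ (∫ g y * p x y dy) * g x dμ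
  have hA : ∫ x, (∫ y, g y * p x y) * g x ∂μ = lam * N := by
    have h1 : ⟪T φ, φ⟫ = lam * N := by
      rw [heig, real_inner_smul_left, hNinner]
    rw [← h1, L2.inner_def]
    refine integral_congr_ae ?_
    filter_upwards [hT_kernel φ, hgμ] with x hx hgx
    have hinner : ∫ y, g y * p x y = ∫ y, p x y * (φ : (Fin d → ℝ) → ℝ) y := by
      refine integral_congr_ae (hgv.mono fun y hy => ?_)
      simp only [hy]; ring
    simp [RCLike.inner_apply, conj_trivial, hx, hgx, hinner]
    ring
  -- product measure
  set P : Measure ((Fin d → ℝ) × (Fin d → ℝ)) := μ.prod volume with hPdef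
  -- lintegral of p against μ in x equals π y
  have hlp : ∀ y : Fin d → ℝ, ∫⁻ x, ENNReal.ofReal (p x y) ∂μ = ENNReal.ofReal (π y) := by
    intro y
    rw [hμ, lintegral_withDensity_eq_lintegral_mul _ hπ_meas.ennreal_ofReal
      (hpxy y).ennreal_ofReal]
    have heq : ∀ x, ((fun x => ENNReal.ofReal (π x)) * fun x => ENNReal.ofReal (p x y)) x
        = ENNReal.ofReal (p x y * π x) := by
      intro x
      simp only [Pi.mul_apply]
      rw [← ENNReal.ofReal_mul (hπ_nn x), mul_comm]
    simp_rw [heq]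
    rw [← ofReal_integral_eq_lintegral_ofReal (hpπ_int y)
      (Filter.Eventually.of_forall fun x => mul_nonneg (hp_pos x y).le (hπ_nn x)),
      hp_inv y]
  have hlq : ∀ x : Fin d → ℝ, (∫⁻ y, ENNReal.ofReal (p x y)) = (1 : ℝ≥0∞) := by
    intro x
    rw [← ofReal_integral_eq_lintegral_ofReal (hp_int x)
      (Filter.Eventually.of_forall fun y => (hp_pos x y).le), hp_norm x, ENNReal.ofReal_one]
  -- lintegral of g² against μ
  have hlg2 : ∫⁻ x, ENNReal.ofReal (g x ^ 2) ∂μ = ENNReal.ofReal N := by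
    rw [← ofReal_integral_eq_lintegral_ofReal hg2
      (Filter.Eventually.of_forall fun x => sq_nonneg _), hNdef]
  -- measurability of the three pieces
  have hgm2 : Measurable fun z : (Fin d → ℝ) × (Fin d → ℝ) => p z.1 z.2 := by
    exact hp_meas
  have hmeas1 : Measurable fun z : (Fin d → ℝ) × (Fin d → ℝ) => g z.2 ^ 2 * p z.1 z.2 :=
    ((hgm.comp measurable_snd).pow_const 2).mul hgm2
  have hmeas2 : Measurable fun z : (Fin d → ℝ) × (Fin d → ℝ) => g z.1 ^ 2 * p z.1 z.2 :=
    ((hgm.comp measurable_fst).pow_const 2).mul hgm2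
  have hmeas3 : Measurable fun z : (Fin d → ℝ) × (Fin d → ℝ) => g z.1 * g z.2 * p z.1 z.2 :=
    ((hgm.comp measurable_fst).mul (hgm.comp measurable_snd)).mul hgm2
  -- lintegral values of the two nonnegative pieces
  have hl1 : ∫⁻ z, ENNReal.ofReal (g z.2 ^ 2 * p z.1 z.2) ∂P = ENNReal.ofReal N := by
    rw [hPdef, lintegral_prod _ hmeas1.ennreal_ofReal.aemeasurable]
    have hswap : (∫⁻ x, (∫⁻ y, ENNReal.ofReal (g y ^ 2 * p x y)) ∂μ)
        = ∫⁻ y, (∫⁻ x, ENNReal.ofReal (g y ^ 2 * p x y) ∂μ) :=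
      lintegral_lintegral_swap (f := fun x y => ENNReal.ofReal (g y ^ 2 * p x y))
        hmeas1.ennreal_ofReal.aemeasurable
    rw [hswap]
    have heq : ∀ y : Fin d → ℝ, (∫⁻ x, ENNReal.ofReal (g y ^ 2 * p x y) ∂μ)
        = ENNReal.ofReal (g y ^ 2) * ENNReal.ofReal (π y) := by
      intro y
      simp_rw [ENNReal.ofReal_mul (sq_nonneg (g y))]
      rw [lintegral_const_mul _ (hpxy y).ennreal_ofReal, hlp y]
    simp_rw [heq]
    have h2 : (∫⁻ y, ENNReal.ofReal (g y ^ 2) * ENNReal.ofReal (π y))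
        = ∫⁻ y, ENNReal.ofReal (g y ^ 2) ∂μ := by
      rw [hμ, lintegral_withDensity_eq_lintegral_mul _ hπ_meas.ennreal_ofReal
        ((hgm.pow_const 2).ennreal_ofReal)]
      simp only [Pi.mul_apply]
      simp_rw [mul_comm]
    rw [h2, hlg2]
  have hl2 : ∫⁻ z, ENNReal.ofReal (g z.1 ^ 2 * p z.1 z.2) ∂P = ENNReal.ofReal N := by
    rw [hPdef, lintegral_prod _ hmeas2.ennreal_ofReal.aemeasurable]
    have heq : ∀ x : Fin d → ℝ, (∫⁻ y, ENNReal.ofReal (g x ^ 2 * p x y))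
        = ENNReal.ofReal (g x ^ 2) := by
      intro x
      simp_rw [ENNReal.ofReal_mul (sq_nonneg (g x))]
      rw [lintegral_const_mul _ (hpyx x).ennreal_ofReal, hlq x, mul_one]
    simp_rw [heq]
    exact hlg2
  -- Integrability of the three pieces over P
  have hInt1 : Integrable (fun z : (Fin d → ℝ) × (Fin d → ℝ) => g z.2 ^ 2 * p z.1 z.2) P := by
    refine ⟨hmeas1.aestronglyMeasurable, ?_⟩
    rw [hasFiniteIntegral_iff_ofReal (Filter.Eventually.of_forall
      fun z : (Fin d → ℝ) × (Fin d → ℝ) => mul_nonneg (sq_nonneg _) (hp_pos z.1 z.2).le), hl1]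
    exact ENNReal.ofReal_lt_top
  have hInt2 : Integrable (fun z : (Fin d → ℝ) × (Fin d → ℝ) => g z.1 ^ 2 * p z.1 z.2) P := by
    refine ⟨hmeas2.aestronglyMeasurable, ?_⟩
    rw [hasFiniteIntegral_iff_ofReal (Filter.Eventually.of_forall
      fun z : (Fin d → ℝ) × (Fin d → ℝ) => mul_nonneg (sq_nonneg _) (hp_pos z.1 z.2).le), hl2]
    exact ENNReal.ofReal_lt_top
  have hInt3 : Integrable (fun z : (Fin d → ℝ) × (Fin d → ℝ) => g z.1 * g z.2 * p z.1 z.2) P := by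
    refine Integrable.mono' ((hInt1.add hInt2).const_mul (1/2 : ℝ))
      hmeas3.aestronglyMeasurable (Filter.Eventually.of_forall
        fun z : (Fin d → ℝ) × (Fin d → ℝ) => ?_)
    have hpz := (hp_pos z.1 z.2).le
    have h1 : |g z.1 * g z.2 * p z.1 z.2| = |g z.1 * g z.2| * p z.1 z.2 := by
      rw [abs_mul, abs_of_nonneg hpz]
    rw [Real.norm_eq_abs, h1]
    have h2 : |g z.1 * g z.2| ≤ 1/2 * (g z.2 ^ 2 + g z.1 ^ 2) := by
      rw [abs_mul]
      nlinarith [sq_nonneg (|g z.1| - |g z.2|), sq_abs (g z.1), sq_abs (g z.2)]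
    calc |g z.1 * g z.2| * p z.1 z.2
        ≤ (1/2 * (g z.2 ^ 2 + g z.1 ^ 2)) * p z.1 z.2 :=
          mul_le_mul_of_nonneg_right h2 hpz
      _ = 1/2 * (g z.2 ^ 2 * p z.1 z.2 + g z.1 ^ 2 * p z.1 z.2) := by ring
  -- the values of the three integrals
  have hval1 : ∫ z, g z.2 ^ 2 * p z.1 z.2 ∂P = N := by
    rw [integral_eq_lintegral_of_nonneg_ae (Filter.Eventually.of_forall
      fun z : (Fin d → ℝ) × (Fin d → ℝ) => mul_nonneg (sq_nonneg _) (hp_pos z.1 z.2).le)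
      hmeas1.aestronglyMeasurable, hl1, ENNReal.toReal_ofReal hNpos.le]
  have hval2 : ∫ z, g z.1 ^ 2 * p z.1 z.2 ∂P = N := by
    rw [integral_eq_lintegral_of_nonneg_ae (Filter.Eventually.of_forall
      fun z : (Fin d → ℝ) × (Fin d → ℝ) => mul_nonneg (sq_nonneg _) (hp_pos z.1 z.2).le)
      hmeas2.aestronglyMeasurable, hl2, ENNReal.toReal_ofReal hNpos.le]
  have hval3 : ∫ z, g z.1 * g z.2 * p z.1 z.2 ∂P = lam * N := by
    rw [hPdef, integral_prod _ hInt3, ← hA]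
    refine integral_congr_ae (Filter.Eventually.of_forall fun x => ?_)
    simp_rw [mul_assoc]
    rw [integral_const_mul]
    ring
  -- key identity
  have hkey : ∀ s : ℝ, ∫ z, (g z.2 - s * g z.1) ^ 2 * p z.1 z.2 ∂P
      = (1 + s ^ 2 - 2 * s * lam) * N := by
    intro s
    have hI2' : Integrable (fun z : (Fin d → ℝ) × (Fin d → ℝ) =>
        s ^ 2 * (g z.1 ^ 2 * p z.1 z.2)) P := hInt2.const_mul _
    have hI3' : Integrable (fun z : (Fin d → ℝ) × (Fin d → ℝ) =>
        2 * s * (g z.1 * g z.2 * p z.1 z.2)) P := hInt3.const_mul _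
    have hI12 : Integrable (fun z : (Fin d → ℝ) × (Fin d → ℝ) =>
        g z.2 ^ 2 * p z.1 z.2 + s ^ 2 * (g z.1 ^ 2 * p z.1 z.2)) P := hInt1.add hI2'
    have heq : (fun z : (Fin d → ℝ) × (Fin d → ℝ) => (g z.2 - s * g z.1) ^ 2 * p z.1 z.2)
        = fun z : (Fin d → ℝ) × (Fin d → ℝ) =>
          (g z.2 ^ 2 * p z.1 z.2 + s ^ 2 * (g z.1 ^ 2 * p z.1 z.2))
          - 2 * s * (g z.1 * g z.2 * p z.1 z.2) := by
      funext z; ring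
    rw [heq, integral_sub hI12 hI3', integral_add hInt1 hI2',
      integral_const_mul, integral_const_mul, hval1, hval2, hval3]
    ring
  -- nonnegativity gives the bounds
  have hbound : ∀ s : ℝ, 0 ≤ (1 + s ^ 2 - 2 * s * lam) * N := by
    intro s
    rw [← hkey s]
    exact integral_nonneg fun z => mul_nonneg (sq_nonneg _) (hp_pos z.1 z.2).le
  have hle : lam ≤ 1 := by
    have := hbound 1
    nlinarith
  have hge : -1 ≤ lam := by
    have := hbound (-1)
    nlinarith
  -- equality analysis
  have hconst : ∀ s : ℝ, 1 + s ^ 2 - 2 * s * lam = 0 →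
      ∀ᵐ x ∂μ, ∀ᵐ y ∂(volume : Measure (Fin d → ℝ)), g y = s * g x := by
    intro s hzero
    have hint : Integrable (fun z : (Fin d → ℝ) × (Fin d → ℝ) =>
        (g z.2 - s * g z.1) ^ 2 * p z.1 z.2) P := by
      have heq : (fun z : (Fin d → ℝ) × (Fin d → ℝ) => (g z.2 - s * g z.1) ^ 2 * p z.1 z.2)
          = fun z : (Fin d → ℝ) × (Fin d → ℝ) =>
            (g z.2 ^ 2 * p z.1 z.2 + s ^ 2 * (g z.1 ^ 2 * p z.1 z.2))
            - 2 * s * (g z.1 * g z.2 * p z.1 z.2) := by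
        funext z; ring
      rw [heq]
      exact (hInt1.add (hInt2.const_mul _)).sub (hInt3.const_mul _)
    have hzero' : ∫ z, (g z.2 - s * g z.1) ^ 2 * p z.1 z.2 ∂P = 0 := by
      rw [hkey s, hzero, zero_mul]
    have hae : (fun z : (Fin d → ℝ) × (Fin d → ℝ) =>
        (g z.2 - s * g z.1) ^ 2 * p z.1 z.2) =ᵐ[P] 0 :=
      (integral_eq_zero_iff_of_nonneg
        (fun z : (Fin d → ℝ) × (Fin d → ℝ) =>
          mul_nonneg (sq_nonneg _) (hp_pos z.1 z.2).le) hint).mp hzero'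
    have hae2 : ∀ᵐ z ∂P, g z.2 = s * g z.1 := by
      filter_upwards [hae] with z hz
      have hp' := (hp_pos z.1 z.2).ne'
      have hsq : (g z.2 - s * g z.1) ^ 2 = 0 := by
        by_contra h
        exact absurd hz (mul_ne_zero h hp')
      have := (pow_eq_zero_iff two_ne_zero).mp hsq
      linarith
    exact Measure.ae_ae_of_ae_prod hae2
  -- nonvanishing measures
  have hvol_ne : (volume : Measure (Fin d → ℝ)) ≠ 0 := by
    intro h
    have h0 : μ Set.univ = 0 := hac1 (by simp [h])
    rw [hμ_univ] at h0
    exact one_ne_zero h0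
  haveI : NeZero μ := ⟨fun h => by
    have h0 := Measure.measure_univ_eq_zero.mpr h
    rw [hμ_univ] at h0
    exact one_ne_zero h0⟩
  haveI hμ_neBot : (ae μ).NeBot := ae_neBot.mpr (NeZero.ne μ)
  haveI hv_neBot : (ae (volume : Measure (Fin d → ℝ))).NeBot := ae_neBot.mpr hvol_ne
  -- lam ≠ -1
  have hne : lam ≠ -1 := by
    intro hlam
    have hz : 1 + (-1:ℝ) ^ 2 - 2 * (-1) * lam = 0 := by rw [hlam]; ring
    have h := hconst (-1) hz
    obtain ⟨x₁, hx₁⟩ := h.exists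
    have hgc : g =ᵐ[volume] fun _ => -g x₁ := by
      filter_upwards [hx₁] with y hy
      simpa using hy
    have h2 : ∀ᵐ x ∂μ, g x = -g x₁ := hac1.ae_le hgc
    obtain ⟨x₂, hx₂c, hx₂e⟩ := (h2.and h).exists
    obtain ⟨y₀, hy₁, hy₂⟩ := (hx₁.and hx₂e).exists
    rw [hx₂c] at hy₂
    have hc0 : g x₁ = 0 := by
      have : -1 * g x₁ = -1 * -g x₁ := hy₁.symm.trans hy₂
      linarith
    have hzero : (φ : (Fin d → ℝ) → ℝ) =ᵐ[μ] 0 := by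
      filter_upwards [hgμ, h2] with x h1 h2'
      simp [h1, h2', hc0]
    exact hφ ((Lp.eq_zero_iff_ae_eq_zero).mpr hzero)
  refine ⟨⟨lt_of_le_of_ne hge fun h => hne h.symm, hle⟩, ?_⟩
  -- lam = 1 case
  intro hlam
  have hz : 1 + (1:ℝ) ^ 2 - 2 * 1 * lam = 0 := by rw [hlam]; ring
  have h := hconst 1 hz
  obtain ⟨x₁, hx₁⟩ := h.exists
  refine ⟨g x₁, ?_⟩
  have hgc : g =ᵐ[volume] fun _ => g x₁ := by
    filter_upwards [hx₁] with y hy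
    simpa using hy
  have h2 : ∀ᵐ x ∂μ, g x = g x₁ := hac1.ae_le hgc
  filter_upwards [hgμ, h2] with x h1 h2'
  rw [h1, h2']
end

section
/- In the setting of a compact self-adjoint nonnegative transfer operator T with eigen-decomposition as above, the variational formula ∑_{i=1}^m ω_i λ_i = max { ∑_{i=1}^m ω_i ⟨f_i, T f_i⟩_μ : f₁,…,f_m ∈ H, E_μ(f_i)=0, ⟨f_i,f_j⟩_μ=δ_{ij} } holds (the VAMP-type formulation), equivalent to the Dirichlet energy minimization via E(f) = ⟨(I−T)f,f⟩_μ and the normalization constraints. -/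
/-!
Expand each `f i` in the eigenbasis: with `q i j = ⟪f i, φ (j + 1)⟫²` the rows of `q` sum to `1`
(Parseval and `⟪f i, φ 0⟫ = 0`), its columns sum to at most `1` (Bessel), and
`⟪f i, T (f i)⟫ = ∑ j, λ_{j+1} q i j`. For such a doubly substochastic matrix and antitone `λ`,
pivoting at `λ_{k+1}` gives Ky Fan's bound `∑_{i<k} ⟪f i, T (f i)⟫ ≤ ∑_{i<k} λ_{i+1}` on every
initial segment of the family, and Abel summation against the antitone weights `ω` yields the
weighted bound. The eigenvectors `φ 1, …, φ m` attain it.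
-/

open RealInnerProductSpace Finset

theorem hasSum_le_add_sum_range_of_antitone {μ q : ℕ → ℝ} (hμ : Antitone μ)
    (hq : ∀ j, 0 ≤ q j) (hq1 : HasSum q 1) {s : ℝ} (hs : HasSum (fun j => μ j * q j) s)
    (k : ℕ) : s ≤ μ k + ∑ j ∈ range k, (μ j - μ k) * q j := by
  have hshift : HasSum (fun j => (μ k - μ j) * q j) (μ k - s) := by
    simpa only [sub_mul, mul_one] using (hq1.mul_left (μ k)).sub hs
  have hhead := sum_le_hasSum (range k)
    (fun j hj => mul_nonneg (sub_nonneg.2 (hμ (not_lt.1 (mem_range.not.1 hj)))) (hq j)) hshift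
  have hneg : ∑ j ∈ range k, (μ j - μ k) * q j = -∑ j ∈ range k, (μ k - μ j) * q j := by
    rw [← sum_neg_distrib]
    exact sum_congr rfl fun j _ => by ring
  linarith

theorem sum_le_sum_range_of_substochastic {ι : Type*} [Fintype ι] {μ : ℕ → ℝ}
    (hμ : Antitone μ) {q : ι → ℕ → ℝ} (hq : ∀ i j, 0 ≤ q i j) (hrow : ∀ i, HasSum (q i) 1)
    (hcol : ∀ j, ∑ i, q i j ≤ 1) {s : ι → ℝ} (hs : ∀ i, HasSum (fun j => μ j * q i j) (s i)) :
    ∑ i, s i ≤ ∑ j ∈ range (Fintype.card ι), μ j := by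
  set k := Fintype.card ι
  calc ∑ i, s i ≤ ∑ i, (μ k + ∑ j ∈ range k, (μ j - μ k) * q i j) :=
        sum_le_sum fun i _ => hasSum_le_add_sum_range_of_antitone hμ (hq i) (hrow i) (hs i) k
    _ = k * μ k + ∑ j ∈ range k, (μ j - μ k) * ∑ i, q i j := by
        simp only [sum_add_distrib, sum_const, card_univ, nsmul_eq_mul, mul_sum]
        rw [sum_comm]
    _ ≤ k * μ k + ∑ j ∈ range k, (μ j - μ k) := by
        gcongr with j hj
        exact mul_le_of_le_one_right (sub_nonneg.2 (hμ (mem_range.1 hj).le)) (hcol j)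
    _ = ∑ j ∈ range k, μ j := by
        simp only [sum_sub_distrib, sum_const, card_range, nsmul_eq_mul]
        ring

namespace HilbertBasis

variable {ι H : Type*} [NormedAddCommGroup H] [InnerProductSpace ℝ H]

theorem hasSum_inner_sq (b : HilbertBasis ι ℝ H) (v : H) :
    HasSum (fun i => ⟪v, b i⟫ ^ 2) (‖v‖ ^ 2) := by
  simpa only [real_inner_comm v, ← sq, real_inner_self_eq_norm_sq]
    using b.hasSum_inner_mul_inner v v

theorem hasSum_eigenvalue_mul_inner_sq (b : HilbertBasis ι ℝ H) {T : H →ₗ[ℝ] H}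
    (hT : T.IsSymmetric) {lam : ι → ℝ} (heig : ∀ i, T (b i) = lam i • b i) (v : H) :
    HasSum (fun i => lam i * ⟪v, b i⟫ ^ 2) ⟪v, T v⟫ := by
  have hcoeff (i : ι) : ⟪v, b i⟫ * ⟪b i, T v⟫ = lam i * ⟪v, b i⟫ ^ 2 := by
    rw [← hT, heig, real_inner_smul_left, real_inner_comm v]
    ring
  simpa only [hcoeff] using b.hasSum_inner_mul_inner v (T v)

theorem sum_inner_apply_le_sum_eigenvalues (b : HilbertBasis ℕ ℝ H) {T : H →ₗ[ℝ] H}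
    (hT : T.IsSymmetric) {lam : ℕ → ℝ} (hlam : Antitone lam)
    (heig : ∀ i, T (b i) = lam i • b i) {κ : Type*} [Fintype κ] {v : κ → H}
    (hv : Orthonormal ℝ v) (hv0 : ∀ i, ⟪v i, b 0⟫ = 0) :
    ∑ i, ⟪v i, T (v i)⟫ ≤ ∑ j ∈ range (Fintype.card κ), lam (j + 1) := by
  refine sum_le_sum_range_of_substochastic (q := fun i j => ⟪v i, b (j + 1)⟫ ^ 2)
    (hlam.comp_monotone fun _ _ h => Nat.succ_le_succ h) (fun _ _ => sq_nonneg _)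
    (fun i => ?_) (fun j => ?_) (fun i => ?_)
  · simpa [hv0, hv.1 i] using (hasSum_nat_add_iff' 1).2 (b.hasSum_inner_sq (v i))
  · simpa [real_inner_comm, b.orthonormal.1] using hv.sum_inner_products_le (b (j + 1))
  · simpa [hv0] using (hasSum_nat_add_iff' 1).2 (b.hasSum_eigenvalue_mul_inner_sq hT heig (v i))

end HilbertBasis

theorem Fin.sum_mul_nonneg_of_antitone {m : ℕ} {w e : Fin m → ℝ} (hw : Antitone w)
    (hw0 : ∀ i, 0 ≤ w i) (he : ∀ k (hk : k ≤ m), 0 ≤ ∑ i : Fin k, e (Fin.castLE hk i)) :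
    0 ≤ ∑ i, w i * e i := by
  induction m with
  | zero => simp
  | succ n ih =>
    have habel : ∑ i, w i * e i = ∑ i : Fin n, (w i.castSucc - w (last n)) * e i.castSucc
        + w (last n) * ∑ i, e i := by
      simp only [Fin.sum_univ_castSucc, sub_mul, sum_sub_distrib, mul_add, mul_sum]
      ring
    rw [habel]
    refine add_nonneg (ih (fun _ _ h => sub_le_sub_right (hw (castSucc_le_castSucc_iff.2 h)) _)
      (fun i => sub_nonneg.2 (hw (le_last _))) fun k hk => ?_) ?_
    · simpa using he k (hk.trans n.le_succ)
    · simpa using mul_nonneg (hw0 _) (he (n + 1) le_rfl)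

theorem vamp_variational_formula_general {H : Type*}
    [NormedAddCommGroup H] [InnerProductSpace ℝ H] [CompleteSpace H]
    (T : H →L[ℝ] H) (hT : IsSelfAdjoint T)
    (lam : ℕ → ℝ) (φ : ℕ → H)
    (hON : Orthonormal ℝ φ)
    (hspan : (Submodule.span ℝ (Set.range φ)).topologicalClosure = ⊤)
    (heig : ∀ i, T (φ i) = lam i • φ i)
    (hanti : Antitone lam)
    (m : ℕ) (ω : Fin m → ℝ)
    (hω_mono : ∀ i j : Fin m, i ≤ j → ω j ≤ ω i) (hω_pos : ∀ i, 0 < ω i) :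
    IsGreatest
      { S : ℝ | ∃ f : Fin m → H,
          (∀ i, ⟪f i, φ 0⟫ = 0) ∧
          (∀ i j, ⟪f i, f j⟫ = if i = j then 1 else 0) ∧
          S = ∑ i, ω i * ⟪f i, T (f i)⟫ }
      (∑ i : Fin m, ω i * lam (i.val + 1)) := by
  refine ⟨⟨fun i => φ (i.val + 1), fun i => ?_, fun i j => ?_, ?_⟩, ?_⟩
  · simpa using orthonormal_iff_ite.1 hON (i.val + 1) 0
  · simpa [Fin.val_inj] using orthonormal_iff_ite.1 hON (i.val + 1) (j.val + 1)
  · simp [heig, real_inner_smul_right, hON.1]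
  rintro S ⟨f, hf0, hf, rfl⟩
  let b := HilbertBasis.mk hON hspan.ge
  have hb : ⇑b = φ := HilbertBasis.coe_mk _ _
  rw [← sub_nonneg, ← sum_sub_distrib]
  simp_rw [← mul_sub]
  refine Fin.sum_mul_nonneg_of_antitone hω_mono (fun i => (hω_pos i).le) fun k hk => ?_
  have hKyFan := b.sum_inner_apply_le_sum_eigenvalues hT.isSymmetric hanti (by simpa [hb])
    ((orthonormal_iff_ite.2 hf).comp _ (Fin.castLE_injective hk)) (by simpa only [hb, Function.comp_apply] using fun i => hf0 _)
  rw [Fintype.card_fin, ← Fin.sum_univ_eq_sum_range] at hKyFan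
  simpa [sum_sub_distrib] using hKyFan

/-- (VAMP-type variational formula) For a compact self-adjoint nonnegative
transfer operator `T` on `H = L²_μ` with eigenvalues `1 = λ₀ > λ₁ ≥ … ≥ 0` and orthonormal
eigenbasis `(φ_i)` (`φ₀` the constant function), and weights `ω₁ ≥ … ≥ ω_m > 0`:
`∑ ω_i λ_i = max { ∑ ω_i ⟨f_i, T f_i⟩ : (f_i) zero-mean orthonormal }`. -/
theorem vamp_variational_formula {H : Type*}
    [NormedAddCommGroup H] [InnerProductSpace ℝ H] [CompleteSpace H]
    (T : H →L[ℝ] H) (hT : IsSelfAdjoint T) (hTc : IsCompactOperator (⇑T))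
    (hTpos : ∀ f : H, 0 ≤ ⟪T f, f⟫)
    (lam : ℕ → ℝ) (φ : ℕ → H)
    (hON : Orthonormal ℝ φ)
    (hspan : (Submodule.span ℝ (Set.range φ)).topologicalClosure = ⊤)
    (heig : ∀ i, T (φ i) = lam i • φ i)
    (hl0 : lam 0 = 1) (hl1 : lam 1 < 1)
    (hanti : Antitone lam) (hnn : ∀ i, 0 ≤ lam i)
    (m : ℕ) (hm : 1 ≤ m) (ω : Fin m → ℝ)
    (hω_mono : ∀ i j : Fin m, i ≤ j → ω j ≤ ω i) (hω_pos : ∀ i, 0 < ω i) :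
    IsGreatest
      { S : ℝ | ∃ f : Fin m → H,
          (∀ i, ⟪f i, φ 0⟫ = 0) ∧
          (∀ i j, ⟪f i, f j⟫ = if i = j then 1 else 0) ∧
          S = ∑ i, ω i * ⟪f i, T (f i)⟫ }
      (∑ i : Fin m, ω i * lam (i.val + 1)) :=
  vamp_variational_formula_general T hT lam φ hON hspan heig hanti m ω hω_mono hω_pos
end

section
/- For the committor q (satisfying Tq = q on (A∪B)^c, q|_A = 0, q|_B = 1) of a Markov chain with transition density p and invariant measure μ, the Dirichlet energy of q equals the flux out of B: E(q) = ⟨q,(I−T)q⟩_μ = ∫_B [∫_{ℝ^d} p(x,y)(1−q(y)) dy] μ(dx). -/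
open MeasureTheory

/-- The Dirichlet energy of the committor `q` equals `⟨q, (I-T)q⟩_μ` and
equals the flux out of `B`: `E(q) = ∫_B [∫ p(x,y)(1-q(y)) dy] μ(dx)`, where
`μ(dx) = π(x)dx`. -/
theorem committor_energy_eq_rate {d : ℕ}
    (p : (Fin d → ℝ) → (Fin d → ℝ) → ℝ) (π : (Fin d → ℝ) → ℝ)
    (A B : Set (Fin d → ℝ)) (hA : MeasurableSet A) (hB : MeasurableSet B)
    (hAB : Disjoint A B)
    (hp_meas : Measurable (Function.uncurry p))
    (hπ_meas : Measurable π)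
    (hp_nonneg : ∀ x y, 0 ≤ p x y)
    (hπ_pos : ∀ x, 0 < π x)
    (hπ_prob : ∫ x, π x = 1)
    (hp_norm : ∀ x, ∫ y, p x y = 1)
    (hp_inv : ∀ y, ∫ x, p x y * π x = π y)
    (q : (Fin d → ℝ) → ℝ) (hq_meas : Measurable q)
    (hq2 : Integrable (fun x => q x ^ 2 * π x))
    (hq_comm : ∀ x ∈ (A ∪ B)ᶜ, ∫ y, p x y * q y = q x)
    (hqA : ∀ x ∈ A, q x = 0) (hqB : ∀ x ∈ B, q x = 1) :
    ((1 / 2) * ∫ x, (∫ y, p x y * (q y - q x) ^ 2) * π x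
        = ∫ x, (q x - ∫ y, p x y * q y) * q x * π x) ∧
    ((1 / 2) * ∫ x, (∫ y, p x y * (q y - q x) ^ 2) * π x
        = ∫ x in B, (∫ y, p x y * (1 - q y)) * π x) := by
  classical
  -- basic integrability facts forced by the normalization hypotheses
  have hπ_int : Integrable π := by
    by_contra h
    rw [integral_undef h] at hπ_prob
    exact zero_ne_one hπ_prob
  have hp_int : ∀ x, Integrable (fun y => p x y) := by
    intro x
    by_contra h
    have := hp_norm x
    rw [integral_undef h] at this
    exact zero_ne_one this
  have hpπ_int : ∀ y, Integrable (fun x => p x y * π x) := by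
    intro y
    by_contra h
    have := hp_inv y
    rw [integral_undef h] at this
    exact (hπ_pos y).ne this
  -- measurability of slices
  have hp_meas_left : ∀ y, Measurable fun x => p x y := fun y =>
    hp_meas.comp (measurable_id.prodMk measurable_const)
  have hp_meas_right : ∀ x, Measurable fun y => p x y := fun x =>
    hp_meas.comp (measurable_const.prodMk measurable_id)
  -- Tonelli transfer lemma, `g` weighted on the second coordinate
  have key : ∀ g : (Fin d → ℝ) → ℝ, Measurable g → (∀ y, 0 ≤ g y) →
      Integrable (fun y => g y * π y) →
      Integrable (fun z : (Fin d → ℝ) × (Fin d → ℝ) => p z.1 z.2 * g z.2 * π z.1)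
        (volume.prod volume) ∧
      ∫ z : (Fin d → ℝ) × (Fin d → ℝ), p z.1 z.2 * g z.2 * π z.1 ∂(volume.prod volume)
        = ∫ y, g y * π y := by
    intro g hg hg0 hgint
    have hmeas : Measurable fun z : (Fin d → ℝ) × (Fin d → ℝ) => p z.1 z.2 * g z.2 * π z.1 :=
      (hp_meas.mul (hg.comp measurable_snd)).mul (hπ_meas.comp measurable_fst)
    have hnn : ∀ z : (Fin d → ℝ) × (Fin d → ℝ), 0 ≤ p z.1 z.2 * g z.2 * π z.1 := fun z =>
      mul_nonneg (mul_nonneg (hp_nonneg _ _) (hg0 _)) (hπ_pos _).le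
    have hlint : ∫⁻ z : (Fin d → ℝ) × (Fin d → ℝ),
        ENNReal.ofReal (p z.1 z.2 * g z.2 * π z.1) ∂(volume.prod volume)
        = ENNReal.ofReal (∫ y, g y * π y) := by
      rw [lintegral_prod_symm _ (hmeas.ennreal_ofReal).aemeasurable]
      have step1 : ∀ y, ∫⁻ x, ENNReal.ofReal (p x y * g y * π x)
          = ENNReal.ofReal (g y * π y) := by
        intro y
        have h1 : ∀ x, ENNReal.ofReal (p x y * g y * π x)
            = ENNReal.ofReal (p x y * π x) * ENNReal.ofReal (g y) := by
          intro x
          rw [← ENNReal.ofReal_mul (mul_nonneg (hp_nonneg _ _) (hπ_pos _).le)]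
          ring_nf
        simp only [h1]
        rw [lintegral_mul_const _ (f := fun x => ENNReal.ofReal (p x y * π x))
            (((hp_meas_left y).mul hπ_meas).ennreal_ofReal),
          ← ofReal_integral_eq_lintegral_ofReal (hpπ_int y)
            (Filter.Eventually.of_forall fun x => mul_nonneg (hp_nonneg _ _) (hπ_pos _).le),
          hp_inv y, ← ENNReal.ofReal_mul (hπ_pos y).le]
        ring_nf
      simp only [step1]
      rw [← ofReal_integral_eq_lintegral_ofReal hgint
        (Filter.Eventually.of_forall fun y => mul_nonneg (hg0 y) (hπ_pos y).le)]
    have hint : Integrable (fun z : (Fin d → ℝ) × (Fin d → ℝ) => p z.1 z.2 * g z.2 * π z.1)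
        (volume.prod volume) := by
      refine ⟨hmeas.aestronglyMeasurable, ?_⟩
      rw [hasFiniteIntegral_iff_ofReal (Filter.Eventually.of_forall hnn), hlint]
      exact ENNReal.ofReal_lt_top
    refine ⟨hint, ?_⟩
    rw [integral_eq_lintegral_of_nonneg_ae (Filter.Eventually.of_forall hnn)
      hmeas.aestronglyMeasurable, hlint, ENNReal.toReal_ofReal]
    exact integral_nonneg fun y => mul_nonneg (hg0 y) (hπ_pos y).le
  -- Tonelli transfer lemma, `g` weighted on the first coordinate
  have key' : ∀ g : (Fin d → ℝ) → ℝ, Measurable g → (∀ y, 0 ≤ g y) →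
      Integrable (fun y => g y * π y) →
      Integrable (fun z : (Fin d → ℝ) × (Fin d → ℝ) => p z.1 z.2 * g z.1 * π z.1)
        (volume.prod volume) ∧
      ∫ z : (Fin d → ℝ) × (Fin d → ℝ), p z.1 z.2 * g z.1 * π z.1 ∂(volume.prod volume)
        = ∫ x, g x * π x := by
    intro g hg hg0 hgint
    have hmeas : Measurable fun z : (Fin d → ℝ) × (Fin d → ℝ) => p z.1 z.2 * g z.1 * π z.1 :=
      (hp_meas.mul (hg.comp measurable_fst)).mul (hπ_meas.comp measurable_fst)
    have hnn : ∀ z : (Fin d → ℝ) × (Fin d → ℝ), 0 ≤ p z.1 z.2 * g z.1 * π z.1 := fun z =>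
      mul_nonneg (mul_nonneg (hp_nonneg _ _) (hg0 _)) (hπ_pos _).le
    have hlint : ∫⁻ z : (Fin d → ℝ) × (Fin d → ℝ),
        ENNReal.ofReal (p z.1 z.2 * g z.1 * π z.1) ∂(volume.prod volume)
        = ENNReal.ofReal (∫ x, g x * π x) := by
      rw [lintegral_prod _ (hmeas.ennreal_ofReal).aemeasurable]
      have step1 : ∀ x, ∫⁻ y, ENNReal.ofReal (p x y * g x * π x)
          = ENNReal.ofReal (g x * π x) := by
        intro x
        have h1 : ∀ y, ENNReal.ofReal (p x y * g x * π x)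
            = ENNReal.ofReal (p x y) * ENNReal.ofReal (g x * π x) := by
          intro y
          rw [← ENNReal.ofReal_mul (hp_nonneg x y)]
          ring_nf
        simp only [h1]
        rw [lintegral_mul_const _ ((hp_meas_right x).ennreal_ofReal),
          ← ofReal_integral_eq_lintegral_ofReal (hp_int x)
            (Filter.Eventually.of_forall fun y => hp_nonneg x y),
          hp_norm x, ENNReal.ofReal_one, one_mul]
      simp only [step1]
      rw [← ofReal_integral_eq_lintegral_ofReal hgint
        (Filter.Eventually.of_forall fun y => mul_nonneg (hg0 y) (hπ_pos y).le)]
    have hint : Integrable (fun z : (Fin d → ℝ) × (Fin d → ℝ) => p z.1 z.2 * g z.1 * π z.1)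
        (volume.prod volume) := by
      refine ⟨hmeas.aestronglyMeasurable, ?_⟩
      rw [hasFiniteIntegral_iff_ofReal (Filter.Eventually.of_forall hnn), hlint]
      exact ENNReal.ofReal_lt_top
    refine ⟨hint, ?_⟩
    rw [integral_eq_lintegral_of_nonneg_ae (Filter.Eventually.of_forall hnn)
      hmeas.aestronglyMeasurable, hlint, ENNReal.toReal_ofReal]
    exact integral_nonneg fun y => mul_nonneg (hg0 y) (hπ_pos y).le
  -- instantiate
  obtain ⟨hF2_int, hF2_val⟩ := key (fun y => q y ^ 2) (hq_meas.pow_const 2)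
    (fun y => sq_nonneg _) hq2
  obtain ⟨hF1_int, hF1_val⟩ := key' (fun y => q y ^ 2) (hq_meas.pow_const 2)
    (fun y => sq_nonneg _) hq2
  obtain ⟨hF0_int, _⟩ := key (fun _ => 1) measurable_const (fun _ => zero_le_one)
    (by simpa using hπ_int)
  set N : ℝ := ∫ x, q x ^ 2 * π x with hN
  -- the cross term is integrable on the product
  have hFc_int : Integrable
      (fun z : (Fin d → ℝ) × (Fin d → ℝ) => p z.1 z.2 * q z.2 * q z.1 * π z.1)
      (volume.prod volume) := by
    refine Integrable.mono' ((hF2_int.add hF1_int).div_const 2)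
      (((hp_meas.mul (hq_meas.comp measurable_snd)).mul (hq_meas.comp measurable_fst)).mul
        (hπ_meas.comp measurable_fst)).aestronglyMeasurable
      (Filter.Eventually.of_forall fun z => ?_)
    have hpπ : 0 ≤ p z.1 z.2 * π z.1 := mul_nonneg (hp_nonneg _ _) (hπ_pos _).le
    simp only [Pi.add_apply]
    rw [Real.norm_eq_abs, abs_le]
    constructor <;>
      nlinarith [mul_nonneg hpπ (sq_nonneg (q z.2 - q z.1)),
        mul_nonneg hpπ (sq_nonneg (q z.2 + q z.1))]
  -- p(x,y) q(y) π(x) is integrable on the product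
  have hG_int : Integrable
      (fun z : (Fin d → ℝ) × (Fin d → ℝ) => p z.1 z.2 * q z.2 * π z.1)
      (volume.prod volume) := by
    refine Integrable.mono' ((hF0_int.add hF2_int).div_const 2)
      ((hp_meas.mul (hq_meas.comp measurable_snd)).mul
        (hπ_meas.comp measurable_fst)).aestronglyMeasurable
      (Filter.Eventually.of_forall fun z => ?_)
    have hpπ : 0 ≤ p z.1 z.2 * π z.1 := mul_nonneg (hp_nonneg _ _) (hπ_pos _).le
    simp only [Pi.add_apply]
    rw [Real.norm_eq_abs, abs_le]
    constructor <;>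
      nlinarith [mul_nonneg hpπ (sq_nonneg (q z.2 - 1)), mul_nonneg hpπ (sq_nonneg (q z.2 + 1))]
  -- pointwise computation of the inner integral of the cross term
  have hinner : ∀ x, ∫ y, p x y * q y * q x * π x = (∫ y, p x y * q y) * q x * π x := by
    intro x
    rw [show (fun y => p x y * q y * q x * π x) = fun y => p x y * q y * (q x * π x) from
      funext fun y => by ring, integral_mul_const, mul_assoc]
  set C : ℝ := ∫ x, (∫ y, p x y * q y) * q x * π x with hC
  have IFc : ∫ z : (Fin d → ℝ) × (Fin d → ℝ), p z.1 z.2 * q z.2 * q z.1 * π z.1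
      ∂(volume.prod volume) = C := by
    refine (integral_integral (f := fun x y => p x y * q y * q x * π x) hFc_int).symm.trans ?_
    exact integral_congr_ae (Filter.Eventually.of_forall fun x => hinner x)
  -- total integrand splits
  have hsplit : (fun z : (Fin d → ℝ) × (Fin d → ℝ) => p z.1 z.2 * (q z.2 - q z.1) ^ 2 * π z.1)
      = fun z => p z.1 z.2 * q z.2 ^ 2 * π z.1 + p z.1 z.2 * q z.1 ^ 2 * π z.1
          - 2 * (p z.1 z.2 * q z.2 * q z.1 * π z.1) := funext fun z => by ring
  have hTot_int : Integrable
      (fun z : (Fin d → ℝ) × (Fin d → ℝ) => p z.1 z.2 * (q z.2 - q z.1) ^ 2 * π z.1)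
      (volume.prod volume) := by
    rw [hsplit]; exact (hF2_int.add hF1_int).sub (hFc_int.const_mul 2)
  have Itot : ∫ z : (Fin d → ℝ) × (Fin d → ℝ), p z.1 z.2 * (q z.2 - q z.1) ^ 2 * π z.1
      ∂(volume.prod volume) = N + N - 2 * C := by
    rw [hsplit]
    refine (integral_sub (hF2_int.add hF1_int) (hFc_int.const_mul 2)).trans ?_
    have h3 : ∫ z : (Fin d → ℝ) × (Fin d → ℝ), 2 * (p z.1 z.2 * q z.2 * q z.1 * π z.1)
        ∂(volume.prod volume) = 2 * C := (integral_const_mul 2 _).trans (by rw [IFc])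
    have h4 : ∫ z : (Fin d → ℝ) × (Fin d → ℝ),
        (p z.1 z.2 * q z.2 ^ 2 * π z.1 + p z.1 z.2 * q z.1 ^ 2 * π z.1)
        ∂(volume.prod volume) = N + N :=
      (integral_add hF2_int hF1_int).trans (by rw [hF2_val, hF1_val])
    exact congrArg₂ (· - ·) h4 h3
  have LHS_eq : ∫ x, (∫ y, p x y * (q y - q x) ^ 2) * π x = N + N - 2 * C := by
    have h1 : ∀ x, (∫ y, p x y * (q y - q x) ^ 2) * π x
        = ∫ y, p x y * (q y - q x) ^ 2 * π x := fun x => (integral_mul_const _ _).symm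
    calc ∫ x, (∫ y, p x y * (q y - q x) ^ 2) * π x
        = ∫ x, ∫ y, p x y * (q y - q x) ^ 2 * π x :=
          integral_congr_ae (Filter.Eventually.of_forall fun x => h1 x)
      _ = ∫ z : (Fin d → ℝ) × (Fin d → ℝ), p z.1 z.2 * (q z.2 - q z.1) ^ 2 * π z.1
            ∂(volume.prod volume) := integral_integral (f := fun x y => p x y * (q y - q x) ^ 2 * π x) hTot_int
      _ = N + N - 2 * C := Itot
  -- integrability of x ↦ (Tq x) q x π x
  have hTq_int : Integrable (fun x => (∫ y, p x y * q y) * q x * π x) := by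
    have h2 := hFc_int.integral_prod_left
    simpa only [hinner] using h2
  have RHS1_eq : ∫ x, (q x - ∫ y, p x y * q y) * q x * π x = N - C := by
    rw [show (fun x => (q x - ∫ y, p x y * q y) * q x * π x)
        = fun x => q x ^ 2 * π x - (∫ y, p x y * q y) * q x * π x from
      funext fun x => by ring]
    exact integral_sub hq2 hTq_int
  have hfirst : (1 / 2 : ℝ) * ∫ x, (∫ y, p x y * (q y - q x) ^ 2) * π x
      = ∫ x, (q x - ∫ y, p x y * q y) * q x * π x := by
    rw [LHS_eq, RHS1_eq]; ring
  refine ⟨hfirst, ?_⟩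
  rw [hfirst]
  -- now show ∫ h = ∫_B ...
  set h : (Fin d → ℝ) → ℝ := fun x => (q x - ∫ y, p x y * q y) * q x * π x with hh
  have h_int : Integrable h := by
    rw [hh, show (fun x => (q x - ∫ y, p x y * q y) * q x * π x)
        = fun x => q x ^ 2 * π x - (∫ y, p x y * q y) * q x * π x from
      funext fun x => by ring]
    exact hq2.sub hTq_int
  have hcompl : ∫ x in (A ∪ B)ᶜ, h x = 0 := by
    rw [setIntegral_congr_fun (hA.union hB).compl
      (fun x hx => show h x = (0 : ℝ) by
        simp only [hh, hq_comm x hx, sub_self, zero_mul])]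
    simp
  have hAzero : ∫ x in A, h x = 0 := by
    rw [setIntegral_congr_fun hA
      (fun x hx => show h x = (0 : ℝ) by
        simp only [hh, hqA x hx, mul_zero, zero_mul])]
    simp
  have hBpart : ∫ x in B, h x = ∫ x in B, (∫ y, p x y * (1 - q y)) * π x := by
    have hae : ∀ᵐ x, Integrable (fun y => p x y * q y * π x) := hG_int.prod_right_ae
    refine setIntegral_congr_ae hB ?_
    filter_upwards [hae] with x hx hxB
    have hqx : q x = 1 := hqB x hxB
    have hpq_int : Integrable (fun y => p x y * q y) := by
      refine (hx.mul_const (π x)⁻¹).congr (Filter.Eventually.of_forall fun y => ?_)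
      field_simp [(hπ_pos x).ne']
    have hint2 : ∫ y, p x y * (1 - q y) = 1 - ∫ y, p x y * q y := by
      rw [show (fun y => p x y * (1 - q y)) = fun y => p x y - p x y * q y from
        funext fun y => by ring, integral_sub (hp_int x) hpq_int, hp_norm x]
    rw [hh]
    simp only [hqx, mul_one]
    rw [hint2]
  calc ∫ x, h x = (∫ x in A ∪ B, h x) + ∫ x in (A ∪ B)ᶜ, h x :=
        (integral_add_compl (hA.union hB) h_int).symm
    _ = (∫ x in A, h x) + (∫ x in B, h x) + 0 := by
        rw [hcompl, setIntegral_union hAB hB h_int.integrableOn h_int.integrableOn]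
    _ = ∫ x in B, (∫ y, p x y * (1 - q y)) * π x := by
        rw [hAzero, hBpart]; ring
end

section
/- Let T̃ be the transfer operator of the effective dynamics associated with the CV map ξ, acting on H̃ = L²_{μ̃}(ℝ^k). Then for all f̃, h̃ ∈ H̃, ⟨T̃ f̃, h̃⟩_{μ̃} = ⟨T(f̃∘ξ), h̃∘ξ⟩_μ, and (T̃ f̃)(z) = E_{μ_z}[T(f̃∘ξ)] for μ̃-a.e. z. -/
open MeasureTheory ProbabilityTheory
open scoped ENNReal NNReal

section Aux

variable {α β γ : Type*} [MeasurableSpace α] [MeasurableSpace β] [MeasurableSpace γ]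

lemma aux_map_bind (m : Measure α) {f : α → Measure β} (hf : Measurable f)
    {g : β → γ} (hg : Measurable g) :
    (m.bind f).map g = m.bind (fun a => (f a).map g) := by
  ext s hs
  have hf' : Measurable (fun a => (f a).map g) := (Measure.measurable_map g hg).comp hf
  rw [Measure.map_apply hg hs, Measure.bind_apply (hg hs) hf.aemeasurable,
    Measure.bind_apply hs hf'.aemeasurable]
  exact lintegral_congr fun a => (Measure.map_apply hg hs).symm

lemma aux_bind_eq_map_snd (m : Measure α) [SFinite m] (K : Kernel α β) [IsSFiniteKernel K] :
    m.bind K = (m ⊗ₘ K).map Prod.snd := by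
  ext s hs
  rw [Measure.map_apply measurable_snd hs, Measure.compProd_apply (measurable_snd hs),
    Measure.bind_apply hs K.measurable.aemeasurable]
  rfl

lemma aux_integral_bind (m : Measure α) [SFinite m] (K : Kernel α β) [IsSFiniteKernel K]
    {f : β → ℝ} (hf : Measurable f) (hint : Integrable f (m.bind K)) :
    ∫ y, f y ∂(m.bind K) = ∫ a, ∫ y, f y ∂(K a) ∂m := by
  rw [aux_bind_eq_map_snd m K] at hint ⊢
  rw [integral_map measurable_snd.aemeasurable hf.aestronglyMeasurable]
  exact Measure.integral_compProd
    ((integrable_map_measure hf.aestronglyMeasurable measurable_snd.aemeasurable).mp hint)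

end Aux

/-- For the effective transfer operator `T̃` of the effective dynamics with
kernel `p̃(z,·) = ∫ (ξ_*P(x,·)) ν_z(dx)`, one has for all `f̃, h̃ ∈ L²_{μ̃}`:
`⟨T̃f̃, h̃⟩_{μ̃} = ⟨T(f̃∘ξ), h̃∘ξ⟩_μ`, and `(T̃f̃)(z) = E_{ν_z}[T(f̃∘ξ)]` for `μ̃`-a.e. `z`. -/
theorem effective_transfer_operator_identities {d k : ℕ}
    (P : (Fin d → ℝ) → Measure (Fin d → ℝ))
    (hP_meas : Measurable P)
    (hP_prob : ∀ x, IsProbabilityMeasure (P x))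
    (μ : Measure (Fin d → ℝ)) [IsProbabilityMeasure μ]
    (hμ_inv : μ.bind P = μ)
    (ξ : (Fin d → ℝ) → (Fin k → ℝ)) (hξ : Measurable ξ)
    (ν : (Fin k → ℝ) → Measure (Fin d → ℝ))
    (hν_meas : Measurable ν)
    (hν_prob : ∀ z, IsProbabilityMeasure (ν z))
    (hν_supp : ∀ z, (ν z) {x | ξ x ≠ z} = 0)
    (hdisint : (μ.map ξ).bind ν = μ) :
    ∀ ftil htil : (Fin k → ℝ) → ℝ,
      Measurable ftil → Measurable htil →
      MemLp ftil 2 (μ.map ξ) → MemLp htil 2 (μ.map ξ) →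
      ((∫ z, (∫ w, ftil w ∂((ν z).bind (fun x => (P x).map ξ))) * htil z ∂(μ.map ξ))
          = ∫ x, (∫ y, ftil (ξ y) ∂(P x)) * htil (ξ x) ∂μ) ∧
      ((fun z => ∫ w, ftil w ∂((ν z).bind (fun x => (P x).map ξ)))
          =ᵐ[μ.map ξ] (fun z => ∫ x, (∫ y, ftil (ξ y) ∂(P x)) ∂(ν z))) := by
  intro ftil htil hftil_m hhtil_m hftil hhtil
  haveI : ∀ z, SFinite (ν z) := fun z => by haveI := hν_prob z; infer_instance
  haveI hμt_prob : IsProbabilityMeasure (μ.map ξ) := Measure.isProbabilityMeasure_map hξ.aemeasurable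
  set μt := μ.map ξ with hμt
  -- kernels
  set KP : Kernel (Fin d → ℝ) (Fin d → ℝ) := ⟨P, hP_meas⟩ with hKP
  haveI : IsMarkovKernel KP := ⟨hP_prob⟩
  set Kν : Kernel (Fin k → ℝ) (Fin d → ℝ) := ⟨ν, hν_meas⟩ with hKν
  haveI : IsMarkovKernel Kν := ⟨hν_prob⟩
  -- pulled back functions
  set g : (Fin d → ℝ) → ℝ := fun x => ftil (ξ x) with hgdef
  set h : (Fin d → ℝ) → ℝ := fun x => htil (ξ x) with hhdef
  have hg_m : Measurable g := hftil_m.comp hξ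
  have hh_m : Measurable h := hhtil_m.comp hξ
  have hg2 : MemLp g 2 μ :=
    (memLp_map_measure_iff hftil_m.aestronglyMeasurable hξ.aemeasurable).mp hftil
  have hh2 : MemLp h 2 μ :=
    (memLp_map_measure_iff hhtil_m.aestronglyMeasurable hξ.aemeasurable).mp hhtil
  -- the transfer operator applied to g
  set Tg : (Fin d → ℝ) → ℝ := fun x => ∫ y, g y ∂(P x) with hTgdef
  have hTg_sm : StronglyMeasurable Tg := by
    have := StronglyMeasurable.integral_kernel_prod_right' (κ := KP)
      (f := fun p : (Fin d → ℝ) × (Fin d → ℝ) => g p.2)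
      ((hg_m.comp measurable_snd).stronglyMeasurable)
    exact this
  have hTg_m : Measurable Tg := hTg_sm.measurable
  -- MemLp Tg 2 μ via Jensen / Cauchy-Schwarz
  have hG2_m : Measurable fun y => (‖g y‖₊ : ℝ≥0∞) ^ (2 : ℝ) :=
    hg_m.enorm.pow_const (2 : ℝ)
  have hkey : ∀ x, (‖Tg x‖₊ : ℝ≥0∞) ^ (2 : ℝ) ≤ ∫⁻ y, (‖g y‖₊ : ℝ≥0∞) ^ (2 : ℝ) ∂(P x) := by
    intro x
    haveI := hP_prob x
    calc (‖Tg x‖₊ : ℝ≥0∞) ^ (2 : ℝ)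
        ≤ (∫⁻ y, (‖g y‖₊ : ℝ≥0∞) ∂(P x)) ^ (2 : ℝ) :=
          ENNReal.rpow_le_rpow (enorm_integral_le_lintegral_enorm _) (by norm_num)
      _ = (eLpNorm g 1 (P x)) ^ (2 : ℝ) := by rw [eLpNorm_one_eq_lintegral_enorm]; rfl
      _ ≤ (eLpNorm g 2 (P x)) ^ (2 : ℝ) :=
          ENNReal.rpow_le_rpow
            (eLpNorm_le_eLpNorm_of_exponent_le one_le_two hg_m.aestronglyMeasurable)
            (by norm_num)
      _ = ∫⁻ y, (‖g y‖₊ : ℝ≥0∞) ^ (2 : ℝ) ∂(P x) := by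
          rw [eLpNorm_eq_lintegral_rpow_enorm_toReal two_ne_zero ENNReal.ofNat_ne_top,
            ← ENNReal.rpow_mul]
          norm_num
          rfl
  have hTg2 : MemLp Tg 2 μ := by
    refine ⟨hTg_sm.aestronglyMeasurable, ?_⟩
    have hB : ∫⁻ x, (‖Tg x‖₊ : ℝ≥0∞) ^ (2 : ℝ) ∂μ
        ≤ ∫⁻ y, (‖g y‖₊ : ℝ≥0∞) ^ (2 : ℝ) ∂μ := by
      calc ∫⁻ x, (‖Tg x‖₊ : ℝ≥0∞) ^ (2 : ℝ) ∂μ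
          ≤ ∫⁻ x, ∫⁻ y, (‖g y‖₊ : ℝ≥0∞) ^ (2 : ℝ) ∂(P x) ∂μ := lintegral_mono hkey
        _ = ∫⁻ y, (‖g y‖₊ : ℝ≥0∞) ^ (2 : ℝ) ∂(μ.bind P) :=
            (Measure.lintegral_bind hP_meas.aemeasurable hG2_m.aemeasurable).symm
        _ = ∫⁻ y, (‖g y‖₊ : ℝ≥0∞) ^ (2 : ℝ) ∂μ := by rw [hμ_inv]
    have hfin : ∫⁻ y, (‖g y‖₊ : ℝ≥0∞) ^ (2 : ℝ) ∂μ < ⊤ := by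
      have := hg2.2
      rw [eLpNorm_eq_lintegral_rpow_enorm_toReal two_ne_zero ENNReal.ofNat_ne_top] at this
      have h2 : (2 : ℝ≥0∞).toReal = 2 := by norm_num
      rw [h2] at this
      simp only [enorm_eq_nnnorm] at this
      by_contra hcon
      push_neg at hcon
      rw [top_le_iff.mp hcon] at this
      simp at this
    rw [eLpNorm_eq_lintegral_rpow_enorm_toReal two_ne_zero ENNReal.ofNat_ne_top]
    have h2 : (2 : ℝ≥0∞).toReal = 2 := by norm_num
    rw [h2]
    exact ENNReal.rpow_lt_top_of_nonneg (by norm_num) (hB.trans_lt hfin).ne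
  -- product integrability
  have hTgh_int : Integrable (fun x => Tg x * h x) μ := by
    have := (hh2.smul (φ := Tg) hTg2 (r := 1)
      (hpqr := ⟨by norm_num [ENNReal.inv_two_add_inv_two]⟩)).integrable le_rfl
    exact this
  -- a.e. integrability of g with respect to (ν z).bind P
  have hB_meas : Measurable fun z => (ν z).bind P :=
    (Measure.measurable_bind' hP_meas).comp hν_meas
  set KB : Kernel (Fin k → ℝ) (Fin d → ℝ) := ⟨fun z => (ν z).bind P, hB_meas⟩ with hKB
  haveI : IsMarkovKernel KB := by
    refine ⟨fun z => ⟨?_⟩⟩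
    haveI := hν_prob z
    rw [Kernel.coe_mk, Measure.bind_apply MeasurableSet.univ hP_meas.aemeasurable]
    simp [(hP_prob _).measure_univ]
  have hlin_meas : Measurable fun z => ∫⁻ x, (‖g x‖₊ : ℝ≥0∞) ∂((ν z).bind P) := by
    have := Measurable.lintegral_kernel (κ := KB) hg_m.enorm
    exact this
  have hlin_eq : ∫⁻ z, (∫⁻ x, (‖g x‖₊ : ℝ≥0∞) ∂((ν z).bind P)) ∂μt
      = ∫⁻ x, (‖g x‖₊ : ℝ≥0∞) ∂μ := by
    rw [← Measure.lintegral_bind (f := fun x => (‖g x‖₊ : ℝ≥0∞)) hB_meas.aemeasurable hg_m.enorm.aemeasurable,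
      ← Measure.bind_bind hν_meas.aemeasurable hP_meas.aemeasurable, hdisint, hμ_inv]
  have hint_ae : ∀ᵐ z ∂μt, Integrable g ((ν z).bind P) := by
    have hfin : ∫⁻ z, (∫⁻ x, (‖g x‖₊ : ℝ≥0∞) ∂((ν z).bind P)) ∂μt ≠ ⊤ := by
      rw [hlin_eq]
      exact (hg2.integrable one_le_two).2.ne
    filter_upwards [ae_lt_top hlin_meas hfin] with z hz
    exact ⟨hg_m.aestronglyMeasurable, hz⟩
  -- Part 2: a.e. identity
  have hae : (fun z => ∫ w, ftil w ∂((ν z).bind (fun x => (P x).map ξ)))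
      =ᵐ[μt] (fun z => ∫ x, Tg x ∂(ν z)) := by
    filter_upwards [hint_ae] with z hz
    have hrw : (ν z).bind (fun x => (P x).map ξ) = ((ν z).bind P).map ξ :=
      (aux_map_bind (ν z) hP_meas hξ).symm
    rw [hrw, integral_map hξ.aemeasurable hftil_m.aestronglyMeasurable]
    exact aux_integral_bind (ν z) KP hg_m hz
  refine ⟨?_, hae⟩
  -- Part 1
  calc ∫ z, (∫ w, ftil w ∂((ν z).bind (fun x => (P x).map ξ))) * htil z ∂μt
      = ∫ z, (∫ x, Tg x ∂(ν z)) * htil z ∂μt := by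
        refine integral_congr_ae ?_
        filter_upwards [hae] with z hz
        rw [hz]
    _ = ∫ z, ∫ x, Tg x * h x ∂(ν z) ∂μt := by
        refine integral_congr_ae (Filter.Eventually.of_forall fun z => ?_)
        have hxz : ∀ᵐ x ∂(ν z), ξ x = z := by
          rw [ae_iff]; exact hν_supp z
        refine ((integral_congr_ae ?_).trans (integral_mul_const (htil z) Tg)).symm
        filter_upwards [hxz] with x hx
        rw [hhdef]
        simp only [hx]
    _ = ∫ x, Tg x * h x ∂(μt.bind ν) :=
        (aux_integral_bind μt Kν (hTg_m.mul hh_m) (by rw [Kernel.coe_mk, hdisint]; exact hTgh_int)).symm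
    _ = ∫ x, Tg x * h x ∂μ := by rw [hdisint]
    _ = ∫ x, (∫ y, ftil (ξ y) ∂(P x)) * htil (ξ x) ∂μ := rfl
end

section
/- The adjoint T̃* of the effective transfer operator T̃ in L²_{μ̃} is given by the kernel p̃*(z,w) = p̃(w,z)π̃(w)/π̃(z), and this kernel equals the effective transition density (with respect to the same CV map ξ) of the adjoint kernel p*(x,y) = p(y,x)π(y)/π(x) of the original process. Consequently, if the original process is reversible (p* = p μ⊗Leb-a.e.), then the effective dynamics is reversible (T̃* = T̃). -/
open MeasureTheory

/-- The adjoint of the effective transfer operator in `L²_{μ̃}` has kernel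
`p̃*(z,w) = p̃(w,z) π̃(w)/π̃(z)`, and this kernel equals the effective transition density
(w.r.t. the same CV map) of the adjoint kernel `p*(x,y) = p(y,x)π(y)/π(x)` of the original
process. Consequently, if the original process is reversible (detailed balance for `p`),
then the effective dynamics is reversible (detailed balance for `p̃`). Here
`p̃(z,w) = π̃(w) ∫_{Σ_z} [∫_{Σ_w} p(x,y)/π(y) μ_w(dy)] μ_z(dx)` with conditional measures
`μ_z = ν z` of the disintegration of `μ` along `ξ`. -/
theorem effective_dynamics_adjoint_and_reversibility {d k : ℕ}
    (p : (Fin d → ℝ) → (Fin d → ℝ) → ℝ) (π : (Fin d → ℝ) → ℝ)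
    (ξ : (Fin d → ℝ) → (Fin k → ℝ)) (hξ : Measurable ξ)
    (πt : (Fin k → ℝ) → ℝ)
    (ν : (Fin k → ℝ) → Measure (Fin d → ℝ))
    (hp_meas : Measurable (Function.uncurry p))
    (hπ_meas : Measurable π) (hπt_meas : Measurable πt)
    (hp_pos : ∀ x y, 0 < p x y)
    (hπ_pos : ∀ x, 0 < π x) (hπt_pos : ∀ z, 0 < πt z)
    (hp_norm : ∀ x, ∫ y, p x y = 1)
    (hp_inv : ∀ y, ∫ x, p x y * π x = π y)
    (hν_prob : ∀ z, IsProbabilityMeasure (ν z))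
    (hν_supp : ∀ z, (ν z) {x | ξ x ≠ z} = 0)
    (hfub : ∀ z w, Integrable (fun q : (Fin d → ℝ) × (Fin d → ℝ) => p q.1 q.2 / π q.2)
      ((ν z).prod (ν w))) :
    -- p̃* coincides with the effective transition density of the adjoint kernel p*
    (∀ z w, (πt z * ∫ x, (∫ y, p x y / π y ∂(ν z)) ∂(ν w)) * πt w / πt z
        = πt w * ∫ x, (∫ y, (p y x * π y / π x) / π y ∂(ν w)) ∂(ν z)) ∧
    -- reversibility of p implies reversibility of the effective dynamics
    ((∀ x y, p x y * π x = p y x * π y) →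
      ∀ z w, (πt w * ∫ x, (∫ y, p x y / π y ∂(ν w)) ∂(ν z)) * πt z
        = (πt z * ∫ x, (∫ y, p x y / π y ∂(ν z)) ∂(ν w)) * πt w) := by
  have hswap : ∀ z w, (∫ x, (∫ y, p x y / π y ∂(ν z)) ∂(ν w))
      = ∫ x, (∫ y, p y x / π x ∂(ν w)) ∂(ν z) := by
    intro z w
    exact MeasureTheory.integral_integral_swap (hfub w z)
  constructor
  · intro z w
    have h1 : (∫ x, (∫ y, (p y x * π y / π x) / π y ∂(ν w)) ∂(ν z))
        = ∫ x, (∫ y, p y x / π x ∂(ν w)) ∂(ν z) := by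
      refine integral_congr_ae (Filter.Eventually.of_forall fun x => ?_)
      refine integral_congr_ae (Filter.Eventually.of_forall fun y => ?_)
      show p y x * π y / π x / π y = p y x / π x
      rw [div_div, mul_comm (π x) (π y), ← div_div, mul_div_assoc,
        div_self (hπ_pos y).ne', mul_one]
    rw [h1, ← hswap z w]
    have hz := (hπt_pos z).ne'
    field_simp
  · intro hrev z w
    have h2 : (∫ x, (∫ y, p x y / π y ∂(ν w)) ∂(ν z))
        = ∫ x, (∫ y, p y x / π x ∂(ν w)) ∂(ν z) := by
      refine integral_congr_ae (Filter.Eventually.of_forall fun x => ?_)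
      refine integral_congr_ae (Filter.Eventually.of_forall fun y => ?_)
      have := hrev x y
      have hx := (hπ_pos x).ne'
      have hy := (hπ_pos y).ne'
      field_simp
      linarith [hrev x y]
    rw [h2, ← hswap z w]
    ring
end

section
/- Suppose T (self-adjoint, compact, nonnegative on L²_μ) has eigenvalues 1 = λ₀ > λ₁ ≥ λ₂ ≥ …, and the effective transfer operator T̃ (self-adjoint, compact, nonnegative on L²_{μ̃}) has eigenvalues 1 = λ̃₀ > λ̃₁ ≥ λ̃₂ ≥ …. Then λ̃_i ≤ λ_i for every i ≥ 1. -/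
open RealInnerProductSpace

/-- Let `T` on `H = L²_μ` and the effective operator `T̃` on `H̃ = L²_{μ̃}`
be compact self-adjoint nonnegative transfer operators with eigenvalues
`1 = λ₀ > λ₁ ≥ λ₂ ≥ …` and `1 = λ̃₀ > λ̃₁ ≥ λ̃₂ ≥ …`. The lifting `f̃ ↦ f̃∘ξ` is a linear
isometry `J : H̃ → H` compatible with the Dirichlet energies,
`⟨(I-T̃)f̃, f̃⟩_{μ̃} = ⟨(I-T)(Jf̃), Jf̃⟩_μ`. Then `λ̃_i ≤ λ_i` for all `i ≥ 1`. -/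
theorem effective_eigenvalues_le {H Ht : Type*}
    [NormedAddCommGroup H] [InnerProductSpace ℝ H] [CompleteSpace H]
    [NormedAddCommGroup Ht] [InnerProductSpace ℝ Ht] [CompleteSpace Ht]
    (T : H →L[ℝ] H) (Tt : Ht →L[ℝ] Ht)
    (hT : IsSelfAdjoint T) (hTt : IsSelfAdjoint Tt)
    (hTc : IsCompactOperator (⇑T)) (hTtc : IsCompactOperator (⇑Tt))
    (hTpos : ∀ f : H, 0 ≤ ⟪T f, f⟫) (hTtpos : ∀ g : Ht, 0 ≤ ⟪Tt g, g⟫)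
    (lam lamt : ℕ → ℝ) (φ : ℕ → H) (φt : ℕ → Ht)
    (hON : Orthonormal ℝ φ) (hONt : Orthonormal ℝ φt)
    (hspan : (Submodule.span ℝ (Set.range φ)).topologicalClosure = ⊤)
    (hspant : (Submodule.span ℝ (Set.range φt)).topologicalClosure = ⊤)
    (heig : ∀ i, T (φ i) = lam i • φ i) (heigt : ∀ i, Tt (φt i) = lamt i • φt i)
    (hl0 : lam 0 = 1) (hl1 : lam 1 < 1) (hanti : Antitone lam) (hnn : ∀ i, 0 ≤ lam i)
    (hlt0 : lamt 0 = 1) (hlt1 : lamt 1 < 1) (hantit : Antitone lamt)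
    (hnnt : ∀ i, 0 ≤ lamt i)
    (J : Ht →ₗᵢ[ℝ] H)
    (hcompat : ∀ g : Ht, ⟪J g - T (J g), J g⟫ = ⟪g - Tt g, g⟫) :
    ∀ i : ℕ, 1 ≤ i → lamt i ≤ lam i := by
  intro i hi
  classical
  have hsym : ∀ x y : H, ⟪T x, y⟫ = ⟪x, T y⟫ := hT.isSymmetric
  -- Hilbert basis of `H` from `φ`
  let b : HilbertBasis ℕ ℝ H := HilbertBasis.mk hON (le_of_eq hspan.symm)
  have hb : ∀ j, b j = φ j := fun j =>
    congrFun (HilbertBasis.coe_mk hON (le_of_eq hspan.symm)) j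
  -- Key upper bound for the Rayleigh quotient of `T` on the orthocomplement of `φ_0,…,φ_{i-1}`
  have keyB : ∀ f : H, (∀ j, j < i → ⟪φ j, f⟫ = 0) → ⟪T f, f⟫ ≤ lam i * ‖f‖ ^ 2 := by
    intro f hf
    have h1 := b.hasSum_inner_mul_inner (T f) f
    have h2 := b.hasSum_inner_mul_inner f f
    have h1' : HasSum (fun j => lam j * ⟪φ j, f⟫ ^ 2) ⟪T f, f⟫ := by
      convert h1 using 2 with j
      case e'_3 => rfl
      rw [hb]
      have : ⟪T f, φ j⟫ = lam j * ⟪φ j, f⟫ := by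
        rw [hsym, heig, real_inner_smul_right, real_inner_comm]
      rw [this]; ring
    have h2' : HasSum (fun j => ⟪φ j, f⟫ ^ 2) (‖f‖ ^ 2) := by
      have : (⟪f, f⟫ : ℝ) = ‖f‖ ^ 2 := real_inner_self_eq_norm_sq f
      rw [← this]
      convert h2 using 2 with j
      case e'_3 => rfl
      rw [hb, real_inner_comm]; ring
    have h3 : HasSum (fun j => lam i * ⟪φ j, f⟫ ^ 2) (lam i * ‖f‖ ^ 2) := h2'.mul_left _
    refine hasSum_le (fun j => ?_) h1' h3
    by_cases hj : j < i
    · rw [hf j hj]; ring_nf; exact le_refl _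
    · exact mul_le_mul_of_nonneg_right (hanti (le_of_not_gt hj)) (sq_nonneg _)
  -- The span of the first `i+1` eigenfunctions of `Tt`
  have hONt' : Orthonormal ℝ (fun j : Fin (i + 1) => φt (j : ℕ)) :=
    hONt.comp _ Fin.val_injective
  set W : Submodule ℝ Ht := Submodule.span ℝ (Set.range (fun j : Fin (i + 1) => φt (j : ℕ)))
    with hW
  have hWfin : FiniteDimensional ℝ W := by
    apply FiniteDimensional.span_of_finite
    exact Set.finite_range _
  have hWrank : Module.finrank ℝ W = i + 1 := by
    rw [hW, finrank_span_eq_card hONt'.linearIndependent, Fintype.card_fin]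
  -- A linear map `W → ℝ^i` recording inner products with `φ_0,…,φ_{i-1}`
  let L : W →ₗ[ℝ] (Fin i → ℝ) := LinearMap.pi
    (fun j => ((innerSL ℝ (φ (j : ℕ))).toLinearMap.comp J.toLinearMap).comp W.subtype)
  have hker : LinearMap.ker L ≠ ⊥ := by
    apply LinearMap.ker_ne_bot_of_finrank_lt
    rw [hWrank, Module.finrank_fin_fun]
    exact Nat.lt_succ_self i
  obtain ⟨g₀, hg₀mem, hg₀ne⟩ := Submodule.exists_mem_ne_zero_of_ne_bot hker
  have hLg : ∀ j : Fin i, ⟪φ (j : ℕ), J (g₀ : Ht)⟫ = 0 := by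
    intro j
    have := LinearMap.mem_ker.mp hg₀mem
    have := congrFun this j
    simpa [L] using this
  have hgW : (g₀ : Ht) ∈ W := g₀.2
  have hgne : (g₀ : Ht) ≠ 0 := fun h => hg₀ne (Subtype.ext h)
  set g : Ht := (g₀ : Ht)
  -- Express `g` in the eigenbasis and bound `⟪Tt g, g⟫` below
  obtain ⟨a, ha⟩ := (Submodule.mem_span_range_iff_exists_fun ℝ).mp hgW
  have hTtg : Tt g = ∑ j : Fin (i + 1), (lamt (j : ℕ) * a j) • φt (j : ℕ) := by
    rw [← ha, map_sum]
    refine Finset.sum_congr rfl fun j _ => ?_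
    rw [ContinuousLinearMap.map_smul, heigt, smul_smul, mul_comm]
  have hinner1 : ⟪Tt g, g⟫ = ∑ j : Fin (i + 1), lamt (j : ℕ) * a j ^ 2 := by
    rw [hTtg]
    nth_rewrite 1 [← ha]
    rw [hONt'.inner_sum]
    refine Finset.sum_congr rfl fun j _ => ?_
    simp; ring
  have hinner2 : ‖g‖ ^ 2 = ∑ j : Fin (i + 1), a j ^ 2 := by
    rw [← real_inner_self_eq_norm_sq]
    nth_rewrite 1 [← ha]; nth_rewrite 1 [← ha]
    rw [hONt'.inner_sum]
    refine Finset.sum_congr rfl fun j _ => ?_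
    simp; ring
  have keyA : lamt i * ‖g‖ ^ 2 ≤ ⟪Tt g, g⟫ := by
    rw [hinner1, hinner2, Finset.mul_sum]
    refine Finset.sum_le_sum fun j _ => ?_
    refine mul_le_mul_of_nonneg_right (hantit ?_) (sq_nonneg _)
    exact Nat.lt_succ_iff.mp j.2
  -- Dirichlet-energy compatibility transfers the bound
  have hnorm : ‖J g‖ = ‖g‖ := J.norm_map g
  have hcomp := hcompat g
  rw [inner_sub_left, inner_sub_left] at hcomp
  have hJg : ⟪J g, J g⟫ = ⟪g, g⟫ := J.inner_map_map g g
  have hEq : ⟪T (J g), J g⟫ = ⟪Tt g, g⟫ := by linarith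
  have hBnd : ⟪T (J g), J g⟫ ≤ lam i * ‖g‖ ^ 2 := by
    have := keyB (J g) (fun j hj => hLg ⟨j, hj⟩)
    rwa [hnorm] at this
  have hpos : (0 : ℝ) < ‖g‖ ^ 2 := by
    have : ‖g‖ ≠ 0 := norm_ne_zero_iff.mpr hgne
    positivity
  have : lamt i * ‖g‖ ^ 2 ≤ lam i * ‖g‖ ^ 2 := by linarith
  exact le_of_mul_le_mul_right (by linarith [this]) hpos
end

section
/- Let φ_i be a normalized eigenfunction of T with eigenvalue λ_i, and φ̃_j a normalized eigenfunction of T̃ with eigenvalue λ̃_j. Then λ_i − λ̃_j = E(φ̃_j∘ξ − φ_i) − (1 − λ_i)‖φ̃_j∘ξ − φ_i‖²_μ, where E is the Dirichlet energy of the full dynamics. -/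
open RealInnerProductSpace

/-!
Subtracting an eigenvector `v` (eigenvalue `λ`) of the symmetric operator `T` leaves the form
`E(f) - (1 - λ)‖f‖²` unchanged, because `E` and `(1 - λ)‖·‖²` have the same bilinear pairing with
`v`. Applied to `f = φ̃_j ∘ ξ`, whose energy is `1 - λ̃_j` by the compatibility of the energies,
this gives `(1 - λ̃_j) - (1 - λ_i)`.
-/

section DirichletEnergy

variable {E : Type*} [NormedAddCommGroup E] [InnerProductSpace ℝ E]

noncomputable def dirichletEnergy (T : E →ₗ[ℝ] E) (f : E) : ℝ := ⟪f - T f, f⟫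

theorem dirichletEnergy_of_apply_eq_smul {T : E →ₗ[ℝ] E} {f : E} {c : ℝ} (hf : T f = c • f) :
    dirichletEnergy T f = (1 - c) * ‖f‖ ^ 2 := by
  rw [dirichletEnergy, hf, inner_sub_left, real_inner_smul_left, real_inner_self_eq_norm_sq]
  ring

theorem dirichletEnergy_sub_eigenvector {T : E →ₗ[ℝ] E} (hT : T.IsSymmetric) {v : E} {c : ℝ}
    (hv : T v = c • v) (u : E) :
    dirichletEnergy T (u - v) - (1 - c) * ‖u - v‖ ^ 2
      = dirichletEnergy T u - (1 - c) * ‖u‖ ^ 2 := by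
  have hTu : ⟪T u, v⟫ = c * ⟪u, v⟫ := by rw [hT u v, hv, real_inner_smul_right]
  simp only [dirichletEnergy, map_sub, hv, norm_sub_sq_real, inner_sub_left, inner_sub_right,
    real_inner_smul_left, hTu, real_inner_self_eq_norm_sq, real_inner_comm u v]
  ring

end DirichletEnergy

theorem eigenvalue_difference_formula_general {H Ht : Type*}
    [NormedAddCommGroup H] [InnerProductSpace ℝ H] [CompleteSpace H]
    [NormedAddCommGroup Ht] [InnerProductSpace ℝ Ht]
    (T : H →L[ℝ] H) (Tt : Ht →L[ℝ] Ht)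
    (hT : IsSelfAdjoint T)
    (J : Ht →ₗᵢ[ℝ] H)
    (hcompat : ∀ g : Ht, ⟪J g - T (J g), J g⟫ = ⟪g - Tt g, g⟫)
    (lami lamtj : ℝ) (φi : H) (φtj : Ht)
    (heig : T φi = lami • φi)
    (heigt : Tt φtj = lamtj • φtj) (hnormt : ‖φtj‖ = 1) :
    lami - lamtj
      = ⟪(J φtj - φi) - T (J φtj - φi), J φtj - φi⟫
        - (1 - lami) * ‖J φtj - φi‖ ^ 2 := by
  have henergy : dirichletEnergy (T : H →ₗ[ℝ] H) (J φtj) = 1 - lamtj := by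
    have hEt := dirichletEnergy_of_apply_eq_smul (T := (Tt : Ht →ₗ[ℝ] Ht)) heigt
    rw [hnormt, one_pow, mul_one] at hEt
    exact (hcompat φtj).trans hEt
  calc lami - lamtj = dirichletEnergy (T : H →ₗ[ℝ] H) (J φtj) - (1 - lami) * ‖J φtj‖ ^ 2 := by
        rw [henergy, J.norm_map, hnormt]; ring
    _ = _ := (dirichletEnergy_sub_eigenvector hT.isSymmetric heig (J φtj)).symm

/-- Let `φ_i` be a normalized eigenfunction of `T` with eigenvalue `λ_i`
and `φ̃_j` a normalized eigenfunction of the effective operator `T̃` with eigenvalue `λ̃_j`,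
where the lifting `J : L²_{μ̃} → L²_μ`, `f̃ ↦ f̃∘ξ`, is a linear isometry compatible with
the Dirichlet energies. Then
`λ_i - λ̃_j = E(φ̃_j∘ξ - φ_i) - (1 - λ_i)‖φ̃_j∘ξ - φ_i‖²_μ`,
with `E(f) = ⟨(I-T)f, f⟩_μ`. -/
theorem eigenvalue_difference_formula {H Ht : Type*}
    [NormedAddCommGroup H] [InnerProductSpace ℝ H] [CompleteSpace H]
    [NormedAddCommGroup Ht] [InnerProductSpace ℝ Ht] [CompleteSpace Ht]
    (T : H →L[ℝ] H) (Tt : Ht →L[ℝ] Ht)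
    (hT : IsSelfAdjoint T) (hTt : IsSelfAdjoint Tt)
    (J : Ht →ₗᵢ[ℝ] H)
    (hcompat : ∀ g : Ht, ⟪J g - T (J g), J g⟫ = ⟪g - Tt g, g⟫)
    (lami lamtj : ℝ) (φi : H) (φtj : Ht)
    (heig : T φi = lami • φi) (hnorm : ‖φi‖ = 1)
    (heigt : Tt φtj = lamtj • φtj) (hnormt : ‖φtj‖ = 1) :
    lami - lamtj
      = ⟪(J φtj - φi) - T (J φtj - φi), J φtj - φi⟫
        - (1 - lami) * ‖J φtj - φi‖ ^ 2 :=
  eigenvalue_difference_formula_general T Tt hT J hcompat lami lamtj φi φtj heig heigt hnormt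
end

section
/- If an eigenfunction φ_i of T with eigenvalue λ_i factors through the CV map, i.e. φ_i = h̃∘ξ for some h̃ ∈ L²_{μ̃}, then λ_i is an eigenvalue of the effective transfer operator T̃ with eigenfunction h̃: T̃h̃ = λ_i h̃. -/
open MeasureTheory

theorem integral_comp_eq_of_ae_eq_const {α β E : Type*} [MeasurableSpace α]
    [NormedAddCommGroup E] [NormedSpace ℝ E] [CompleteSpace E]
    {ν : Measure α} [IsProbabilityMeasure ν] {ξ : α → β} {z : β}
    (hξ : ∀ᵐ x ∂ν, ξ x = z) (g : β → E) :
    ∫ x, g (ξ x) ∂ν = g z := by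
  rw [integral_congr_ae (hξ.mono fun x hx => congrArg g hx), integral_const, probReal_univ,
    one_smul]

theorem factored_eigenfunction_effective_general {d k : ℕ}
    (P : (Fin d → ℝ) → Measure (Fin d → ℝ))
    (ξ : (Fin d → ℝ) → (Fin k → ℝ))
    (ν : (Fin k → ℝ) → Measure (Fin d → ℝ))
    (hν_prob : ∀ z, IsProbabilityMeasure (ν z))
    (hν_supp : ∀ z, (ν z) {x | ξ x ≠ z} = 0)
    (htil : (Fin k → ℝ) → ℝ)
    (lam : ℝ)
    (heig : ∀ x, (∫ y, htil (ξ y) ∂(P x)) = lam * htil (ξ x)) :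
    ∀ z, (∫ x, (∫ y, htil (ξ y) ∂(P x)) ∂(ν z)) = lam * htil z := by
  intro z
  simp_rw [heig]
  exact integral_comp_eq_of_ae_eq_const (ae_iff.mpr (hν_supp z)) fun w => lam * htil w

/-- If an eigenfunction `φ = h̃∘ξ` of the transfer operator `T` (with
eigenvalue `λ`) factors through the CV map `ξ`, then `λ` is an eigenvalue of the effective
transfer operator `T̃` with eigenfunction `h̃`: `(T̃h̃)(z) = ∫ (T(h̃∘ξ)) dν_z = λ h̃(z)`. -/
theorem factored_eigenfunction_effective {d k : ℕ}
    (P : (Fin d → ℝ) → Measure (Fin d → ℝ))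
    (hP_meas : Measurable P)
    (hP_prob : ∀ x, IsProbabilityMeasure (P x))
    (μ : Measure (Fin d → ℝ)) [IsProbabilityMeasure μ]
    (hμ_inv : μ.bind P = μ)
    (ξ : (Fin d → ℝ) → (Fin k → ℝ)) (hξ : Measurable ξ)
    (ν : (Fin k → ℝ) → Measure (Fin d → ℝ))
    (hν_meas : Measurable ν)
    (hν_prob : ∀ z, IsProbabilityMeasure (ν z))
    (hν_supp : ∀ z, (ν z) {x | ξ x ≠ z} = 0)
    (hdisint : (μ.map ξ).bind ν = μ)
    (htil : (Fin k → ℝ) → ℝ) (hhtil_meas : Measurable htil)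
    (lam : ℝ)
    (hinteg : ∀ x, Integrable (fun y => htil (ξ y)) (P x))
    (heig : ∀ x, (∫ y, htil (ξ y) ∂(P x)) = lam * htil (ξ x)) :
    ∀ z, (∫ x, (∫ y, htil (ξ y) ∂(P x)) ∂(ν z)) = lam * htil z :=
  factored_eigenfunction_effective_general P ξ ν hν_prob hν_supp htil lam heig
end

section
/- Let A = ξ^{-1}(Ã), B = ξ^{-1}(B̃) for disjoint sets Ã, B̃ ⊂ ℝ^k, let q be the committor of the reversible chain X_n from A to B and q̃ the committor of the effective dynamics from Ã to B̃, with transition rates k_AB = E(q) and k̃_{ÃB̃} = Ẽ(q̃). Then k̃_{ÃB̃} = k_AB + E(q − q̃∘ξ). In particular k̃_{ÃB̃} ≥ k_AB. -/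
/-!
Detailed balance makes the Dirichlet form `⟨(I - T) f, g⟩_π` symmetric, and writing
`E(g) = ½ ∬ (g x - g y)² π(x) p(x, y)` shows it is nonnegative. Since `q̃ ∘ ξ` agrees with `q` on
`A ∪ B` and `q` is `T`-harmonic off `A ∪ B`, the form vanishes at `(q, q - q̃ ∘ ξ)`; expanding
`E(q - (q - q̃ ∘ ξ))` bilinearly then gives `E(q̃ ∘ ξ) = E(q) + E(q - q̃ ∘ ξ)`.
-/

open MeasureTheory

section ReversibleKernel

variable {α : Type*} [MeasurableSpace α] {μ : Measure α} {p : α → α → ℝ} {π : α → ℝ}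

structure IsReversibleKernel (μ : Measure α) (p : α → α → ℝ) (π : α → ℝ) : Prop where
  measurable_kernel : Measurable (Function.uncurry p)
  measurable_density : Measurable π
  kernel_nonneg : ∀ x y, 0 ≤ p x y
  density_nonneg : ∀ x, 0 ≤ π x
  integral_kernel : ∀ x, ∫ y, p x y ∂μ = 1
  detailed_balance : ∀ x y, p x y * π x = p y x * π y

noncomputable def fluxPairing (μ : Measure α) (p : α → α → ℝ) (π : α → ℝ) (f g : α → ℝ) : ℝ :=
  ∫ z : α × α, f z.1 * g z.2 * (p z.1 z.2 * π z.1) ∂(μ.prod μ)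

noncomputable def dirichletForm (μ : Measure α) (p : α → α → ℝ) (π : α → ℝ) (f g : α → ℝ) : ℝ :=
  ∫ x, (f x - ∫ y, p x y * f y ∂μ) * g x * π x ∂μ

theorem integrable_mul_mul_of_integrable_sq {w f g : α → ℝ} (hw : Measurable w)
    (hw0 : ∀ x, 0 ≤ w x) (hf : Measurable f) (hg : Measurable g)
    (hf2 : Integrable (fun x => f x ^ 2 * w x) μ) (hg2 : Integrable (fun x => g x ^ 2 * w x) μ) :
    Integrable (fun x => f x * g x * w x) μ := by
  refine (hf2.add hg2).mono' (by fun_prop : Measurable _).aestronglyMeasurable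
    (ae_of_all _ fun x => ?_)
  rw [Pi.add_apply, Real.norm_eq_abs, abs_mul, abs_mul, abs_of_nonneg (hw0 x), ← sq_abs (f x),
    ← sq_abs (g x)]
  nlinarith [mul_nonneg (sq_nonneg (|f x| - |g x|)) (hw0 x),
    mul_nonneg (mul_nonneg (abs_nonneg (f x)) (abs_nonneg (g x))) (hw0 x)]

theorem integrable_sub_sq_of_integrable_sq {w f g : α → ℝ} (hw : Measurable w)
    (hw0 : ∀ x, 0 ≤ w x) (hf : Measurable f) (hg : Measurable g)
    (hf2 : Integrable (fun x => f x ^ 2 * w x) μ) (hg2 : Integrable (fun x => g x ^ 2 * w x) μ) :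
    Integrable (fun x => (f x - g x) ^ 2 * w x) μ := by
  refine ((hf2.add hg2).const_mul 2).mono' (by fun_prop : Measurable _).aestronglyMeasurable
    (ae_of_all _ fun x => ?_)
  rw [Pi.add_apply, Real.norm_eq_abs, abs_of_nonneg (mul_nonneg (sq_nonneg _) (hw0 x))]
  nlinarith [mul_nonneg (sq_nonneg (f x + g x)) (hw0 x)]

theorem dirichletForm_eq_zero {S : Set α} {q g : α → ℝ}
    (hq : ∀ x ∉ S, ∫ y, p x y * q y ∂μ = q x) (hg : ∀ x ∈ S, g x = 0) :
    dirichletForm μ p π q g = 0 := by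
  refine integral_eq_zero_of_ae (ae_of_all _ fun x => ?_)
  by_cases hx : x ∈ S
  · simp [hg x hx]
  · simp [hq x hx]

namespace IsReversibleKernel

theorem measurable_flux (h : IsReversibleKernel μ p π) :
    Measurable fun z : α × α => p z.1 z.2 * π z.1 :=
  h.measurable_kernel.mul (h.measurable_density.comp measurable_fst)

theorem flux_nonneg (h : IsReversibleKernel μ p π) (z : α × α) : 0 ≤ p z.1 z.2 * π z.1 :=
  mul_nonneg (h.kernel_nonneg _ _) (h.density_nonneg _)

theorem integral_const_mul_flux (h : IsReversibleKernel μ p π) (c : ℝ) (x : α) :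
    ∫ y, c * (p x y * π x) ∂μ = c * π x := by
  have hc : (fun y => c * (p x y * π x)) = fun y => c * π x * p x y := by
    ext y; ring
  rw [hc, integral_const_mul, h.integral_kernel, mul_one]

theorem flux_swap (h : IsReversibleKernel μ p π) (z : α × α) :
    p z.swap.1 z.swap.2 * π z.swap.1 = p z.1 z.2 * π z.1 :=
  h.detailed_balance z.2 z.1

variable [SFinite μ]

theorem integrable_mul_flux_fst (h : IsReversibleKernel μ p π) {F : α → ℝ} (hF : Measurable F)
    (hFπ : Integrable (fun x => F x * π x) μ) :
    Integrable (fun z : α × α => F z.1 * (p z.1 z.2 * π z.1)) (μ.prod μ) := by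
  have hint : ∀ x, Integrable (p x) μ := fun x =>
    Integrable.of_integral_ne_zero (by rw [h.integral_kernel]; exact one_ne_zero)
  have hmeas : Measurable fun z : α × α => F z.1 * (p z.1 z.2 * π z.1) :=
    (hF.comp measurable_fst).mul h.measurable_flux
  rw [integrable_prod_iff hmeas.aestronglyMeasurable]
  refine ⟨ae_of_all _ fun x => ?_, ?_⟩
  · simpa only [mul_left_comm (F x)] using ((hint x).mul_const (π x)).const_mul (F x)
  · refine hFπ.norm.congr (ae_of_all _ fun x => ?_)
    simp_rw [norm_mul, Real.norm_of_nonneg (h.kernel_nonneg _ _),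
      Real.norm_of_nonneg (h.density_nonneg _), h.integral_const_mul_flux]

theorem integral_mul_flux_fst (h : IsReversibleKernel μ p π) {F : α → ℝ} (hF : Measurable F)
    (hFπ : Integrable (fun x => F x * π x) μ) :
    ∫ z : α × α, F z.1 * (p z.1 z.2 * π z.1) ∂(μ.prod μ) = ∫ x, F x * π x ∂μ := by
  rw [integral_prod _ (h.integrable_mul_flux_fst hF hFπ)]
  simp_rw [h.integral_const_mul_flux]

theorem integrable_mul_flux_swap (h : IsReversibleKernel μ p π) {Φ : α × α → ℝ}
    (hΦ : Integrable (fun z => Φ z * (p z.1 z.2 * π z.1)) (μ.prod μ)) :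
    Integrable (fun z => Φ z.swap * (p z.1 z.2 * π z.1)) (μ.prod μ) := by
  simpa only [Function.comp_def, h.flux_swap] using hΦ.swap

theorem integral_mul_flux_swap (h : IsReversibleKernel μ p π) (Φ : α × α → ℝ) :
    ∫ z, Φ z.swap * (p z.1 z.2 * π z.1) ∂(μ.prod μ)
      = ∫ z, Φ z * (p z.1 z.2 * π z.1) ∂(μ.prod μ) := by
  simpa only [h.flux_swap] using integral_prod_swap (fun z => Φ z * (p z.1 z.2 * π z.1))

theorem integrable_mul_flux_snd (h : IsReversibleKernel μ p π) {F : α → ℝ} (hF : Measurable F)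
    (hFπ : Integrable (fun x => F x * π x) μ) :
    Integrable (fun z : α × α => F z.2 * (p z.1 z.2 * π z.1)) (μ.prod μ) :=
  h.integrable_mul_flux_swap (Φ := fun z => F z.1) (h.integrable_mul_flux_fst hF hFπ)

theorem integral_mul_flux_snd (h : IsReversibleKernel μ p π) {F : α → ℝ} (hF : Measurable F)
    (hFπ : Integrable (fun x => F x * π x) μ) :
    ∫ z : α × α, F z.2 * (p z.1 z.2 * π z.1) ∂(μ.prod μ) = ∫ x, F x * π x ∂μ :=
  (h.integral_mul_flux_swap fun z => F z.1).trans (h.integral_mul_flux_fst hF hFπ)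

theorem integrable_mul_mul_flux (h : IsReversibleKernel μ p π) {f g : α → ℝ} (hf : Measurable f)
    (hg : Measurable g) (hf2 : Integrable (fun x => f x ^ 2 * π x) μ)
    (hg2 : Integrable (fun x => g x ^ 2 * π x) μ) :
    Integrable (fun z : α × α => f z.1 * g z.2 * (p z.1 z.2 * π z.1)) (μ.prod μ) :=
  integrable_mul_mul_of_integrable_sq h.measurable_flux h.flux_nonneg (hf.comp measurable_fst)
    (hg.comp measurable_snd) (h.integrable_mul_flux_fst (hf.pow_const 2) hf2)
    (h.integrable_mul_flux_snd (hg.pow_const 2) hg2)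

theorem fluxPairing_comm (h : IsReversibleKernel μ p π) (f g : α → ℝ) :
    fluxPairing μ p π f g = fluxPairing μ p π g f := by
  rw [fluxPairing, ← h.integral_mul_flux_swap]
  simp only [fluxPairing, Prod.fst_swap, Prod.snd_swap, mul_comm (f _)]

theorem fluxPairing_sub_right (h : IsReversibleKernel μ p π) {f g₁ g₂ : α → ℝ}
    (hf : Measurable f) (hg₁ : Measurable g₁) (hg₂ : Measurable g₂)
    (hf2 : Integrable (fun x => f x ^ 2 * π x) μ) (hg₁2 : Integrable (fun x => g₁ x ^ 2 * π x) μ)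
    (hg₂2 : Integrable (fun x => g₂ x ^ 2 * π x) μ) :
    fluxPairing μ p π f (fun x => g₁ x - g₂ x)
      = fluxPairing μ p π f g₁ - fluxPairing μ p π f g₂ := by
  simp only [fluxPairing, mul_sub, sub_mul]
  exact integral_sub (h.integrable_mul_mul_flux hf hg₁ hf2 hg₁2)
    (h.integrable_mul_mul_flux hf hg₂ hf2 hg₂2)

theorem dirichletForm_eq (h : IsReversibleKernel μ p π) {f g : α → ℝ} (hf : Measurable f)
    (hg : Measurable g) (hf2 : Integrable (fun x => f x ^ 2 * π x) μ)
    (hg2 : Integrable (fun x => g x ^ 2 * π x) μ) :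
    dirichletForm μ p π f g = ∫ x, f x * g x * π x ∂μ - fluxPairing μ p π g f := by
  have hpair := h.integrable_mul_mul_flux hg hf hg2 hf2
  have hTf : ∀ x, (∫ y, p x y * f y ∂μ) * g x * π x
      = ∫ y, g x * f y * (p x y * π x) ∂μ := fun x => by
    rw [← integral_mul_const, ← integral_mul_const]
    exact integral_congr_ae (ae_of_all _ fun y => by ring)
  simp only [dirichletForm, sub_mul, hTf]
  rw [integral_sub (integrable_mul_mul_of_integrable_sq h.measurable_density h.density_nonneg hf hg
    hf2 hg2) hpair.integral_prod_left, fluxPairing, integral_prod _ hpair]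

theorem dirichletForm_comm (h : IsReversibleKernel μ p π) {f g : α → ℝ} (hf : Measurable f)
    (hg : Measurable g) (hf2 : Integrable (fun x => f x ^ 2 * π x) μ)
    (hg2 : Integrable (fun x => g x ^ 2 * π x) μ) :
    dirichletForm μ p π f g = dirichletForm μ p π g f := by
  rw [h.dirichletForm_eq hf hg hf2 hg2, h.dirichletForm_eq hg hf hg2 hf2, h.fluxPairing_comm]
  simp only [mul_comm (f _)]

theorem dirichletForm_sub_left (h : IsReversibleKernel μ p π) {f₁ f₂ g : α → ℝ}
    (hf₁ : Measurable f₁) (hf₂ : Measurable f₂) (hg : Measurable g)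
    (hf₁2 : Integrable (fun x => f₁ x ^ 2 * π x) μ) (hf₂2 : Integrable (fun x => f₂ x ^ 2 * π x) μ)
    (hg2 : Integrable (fun x => g x ^ 2 * π x) μ) :
    dirichletForm μ p π (fun x => f₁ x - f₂ x) g
      = dirichletForm μ p π f₁ g - dirichletForm μ p π f₂ g := by
  have hsub : ∫ x, (f₁ x - f₂ x) * g x * π x ∂μ
      = ∫ x, f₁ x * g x * π x ∂μ - ∫ x, f₂ x * g x * π x ∂μ := by
    simp only [sub_mul]
    exact integral_sub
      (integrable_mul_mul_of_integrable_sq h.measurable_density h.density_nonneg hf₁ hg hf₁2 hg2)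
      (integrable_mul_mul_of_integrable_sq h.measurable_density h.density_nonneg hf₂ hg hf₂2 hg2)
  have hf₁₂ : Measurable fun x => f₁ x - f₂ x := hf₁.sub hf₂
  rw [h.dirichletForm_eq hf₁₂ hg
      (integrable_sub_sq_of_integrable_sq h.measurable_density h.density_nonneg hf₁ hf₂ hf₁2 hf₂2)
      hg2, h.dirichletForm_eq hf₁ hg hf₁2 hg2, h.dirichletForm_eq hf₂ hg hf₂2 hg2,
    h.fluxPairing_sub_right hg hf₁ hf₂ hg2 hf₁2 hf₂2, hsub]
  ring

theorem dirichletForm_sub_right (h : IsReversibleKernel μ p π) {f g₁ g₂ : α → ℝ}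
    (hf : Measurable f) (hg₁ : Measurable g₁) (hg₂ : Measurable g₂)
    (hf2 : Integrable (fun x => f x ^ 2 * π x) μ) (hg₁2 : Integrable (fun x => g₁ x ^ 2 * π x) μ)
    (hg₂2 : Integrable (fun x => g₂ x ^ 2 * π x) μ) :
    dirichletForm μ p π f (fun x => g₁ x - g₂ x)
      = dirichletForm μ p π f g₁ - dirichletForm μ p π f g₂ := by
  have hg₁₂ : Measurable fun x => g₁ x - g₂ x := hg₁.sub hg₂
  rw [h.dirichletForm_comm hf hg₁₂ hf2
      (integrable_sub_sq_of_integrable_sq h.measurable_density h.density_nonneg hg₁ hg₂ hg₁2 hg₂2),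
    h.dirichletForm_sub_left hg₁ hg₂ hf hg₁2 hg₂2 hf2, h.dirichletForm_comm hg₁ hf hg₁2 hf2,
    h.dirichletForm_comm hg₂ hf hg₂2 hf2]

theorem dirichletForm_self_nonneg (h : IsReversibleKernel μ p π) {g : α → ℝ} (hg : Measurable g)
    (hg2 : Integrable (fun x => g x ^ 2 * π x) μ) :
    0 ≤ dirichletForm μ p π g g := by
  have hfst := h.integrable_mul_flux_fst (hg.pow_const 2) hg2
  have hsnd := h.integrable_mul_flux_snd (hg.pow_const 2) hg2
  have hpair := h.integrable_mul_mul_flux hg hg hg2 hg2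
  have hexpand : ∫ z : α × α, (g z.1 - g z.2) ^ 2 * (p z.1 z.2 * π z.1) ∂(μ.prod μ)
      = 2 * (∫ x, g x ^ 2 * π x ∂μ - fluxPairing μ p π g g) := by
    have hpoint : (fun z : α × α => (g z.1 - g z.2) ^ 2 * (p z.1 z.2 * π z.1))
        = fun z => (g z.1 ^ 2 * (p z.1 z.2 * π z.1) + g z.2 ^ 2 * (p z.1 z.2 * π z.1))
          - 2 * (g z.1 * g z.2 * (p z.1 z.2 * π z.1)) := by
      ext z; ring
    have hsum : Integrable (fun z : α × α =>
        g z.1 ^ 2 * (p z.1 z.2 * π z.1) + g z.2 ^ 2 * (p z.1 z.2 * π z.1)) (μ.prod μ) :=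
      hfst.add hsnd
    rw [hpoint, integral_sub hsum (hpair.const_mul 2), integral_add hfst hsnd,
      integral_const_mul, h.integral_mul_flux_fst (hg.pow_const 2) hg2,
      h.integral_mul_flux_snd (hg.pow_const 2) hg2, fluxPairing]
    ring
  have hnonneg : 0 ≤ ∫ z : α × α, (g z.1 - g z.2) ^ 2 * (p z.1 z.2 * π z.1) ∂(μ.prod μ) :=
    integral_nonneg fun z => mul_nonneg (sq_nonneg _) (h.flux_nonneg z)
  rw [h.dirichletForm_eq hg hg hg2 hg2]
  simp only [← sq]
  linarith

theorem dirichletForm_self_eq_add_of_eqOn (h : IsReversibleKernel μ p π) {S : Set α}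
    {q f : α → ℝ} (hq : Measurable q) (hf : Measurable f)
    (hq2 : Integrable (fun x => q x ^ 2 * π x) μ) (hf2 : Integrable (fun x => f x ^ 2 * π x) μ)
    (hharm : ∀ x ∉ S, ∫ y, p x y * q y ∂μ = q x) (hfq : Set.EqOn f q S) :
    dirichletForm μ p π f f
      = dirichletForm μ p π q q
        + dirichletForm μ p π (fun x => q x - f x) (fun x => q x - f x) := by
  have hr2 := integrable_sub_sq_of_integrable_sq h.measurable_density h.density_nonneg hq hf hq2 hf2
  have hzero : dirichletForm μ p π q (fun x => q x - f x) = 0 :=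
    dirichletForm_eq_zero hharm fun x hx => by rw [hfq hx, sub_self]
  have hr : Measurable fun x => q x - f x := hq.sub hf
  have hexpand := h.dirichletForm_sub_left hq hf hr hq2 hf2 hr2
  have hf_sub := h.dirichletForm_sub_right hf hq hf hf2 hq2 hf2
  have hq_sub := h.dirichletForm_sub_right hq hq hf hq2 hq2 hf2
  have hcomm := h.dirichletForm_comm hf hq hf2 hq2
  linear_combination -hexpand - 2 * hzero + hf_sub + hq_sub + hcomm

end IsReversibleKernel

end ReversibleKernel

theorem effective_rate_decomposition_general {d k : ℕ}
    (p : (Fin d → ℝ) → (Fin d → ℝ) → ℝ) (π : (Fin d → ℝ) → ℝ)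
    (ξ : (Fin d → ℝ) → (Fin k → ℝ)) (hξ_meas : Measurable ξ)
    (At Bt : Set (Fin k → ℝ))
    (hp_meas : Measurable (Function.uncurry p))
    (hπ_meas : Measurable π)
    (hp_pos : ∀ x y, 0 < p x y)
    (hπ_pos : ∀ x, 0 < π x)
    (hp_norm : ∀ x, ∫ y, p x y = 1)
    (hdb : ∀ x y, p x y * π x = p y x * π y)
    -- the committor q of the full dynamics from A = ξ⁻¹(Ã) to B = ξ⁻¹(B̃)
    (q : (Fin d → ℝ) → ℝ) (hq_meas : Measurable q)
    (hq2 : Integrable (fun x => q x ^ 2 * π x))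
    (hq_comm : ∀ x, ξ x ∉ At ∪ Bt → (∫ y, p x y * q y) = q x)
    (hqA : ∀ x, ξ x ∈ At → q x = 0) (hqB : ∀ x, ξ x ∈ Bt → q x = 1)
    -- the committor q̃ of the effective dynamics from Ã to B̃ (the minimizer of the
    -- effective Dirichlet energy Ẽ(f̃) = E(f̃∘ξ) subject to the boundary conditions)
    (qt : (Fin k → ℝ) → ℝ) (hqt_meas : Measurable qt)
    (hqt2 : Integrable (fun x => qt (ξ x) ^ 2 * π x))
    (hqtA : ∀ z ∈ At, qt z = 0) (hqtB : ∀ z ∈ Bt, qt z = 1) :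
    ((∫ x, (qt (ξ x) - ∫ y, p x y * qt (ξ y)) * qt (ξ x) * π x)
        = (∫ x, (q x - ∫ y, p x y * q y) * q x * π x)
          + (∫ x, ((q x - qt (ξ x)) - ∫ y, p x y * (q y - qt (ξ y)))
              * (q x - qt (ξ x)) * π x)) ∧
    ((∫ x, (q x - ∫ y, p x y * q y) * q x * π x)
        ≤ (∫ x, (qt (ξ x) - ∫ y, p x y * qt (ξ y)) * qt (ξ x) * π x)) := by
  have hrev : IsReversibleKernel volume p π :=
    ⟨hp_meas, hπ_meas, fun x y => (hp_pos x y).le, fun x => (hπ_pos x).le, hp_norm, hdb⟩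
  have hf : Measurable fun x => qt (ξ x) := hqt_meas.comp hξ_meas
  have hboundary : Set.EqOn (fun x => qt (ξ x)) q (ξ ⁻¹' (At ∪ Bt)) := by
    rintro x (hA | hB)
    · exact (hqtA _ hA).trans (hqA x hA).symm
    · exact (hqtB _ hB).trans (hqB x hB).symm
  have hdecomp := hrev.dirichletForm_self_eq_add_of_eqOn hq_meas hf hq2 hqt2 hq_comm hboundary
  have hnonneg := hrev.dirichletForm_self_nonneg (hq_meas.sub hf)
    (integrable_sub_sq_of_integrable_sq hπ_meas hrev.density_nonneg hq_meas hf hq2 hqt2)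
  exact ⟨hdecomp, (le_add_of_nonneg_right hnonneg).trans_eq hdecomp.symm⟩

/-- For `A = ξ⁻¹(Ã)`, `B = ξ⁻¹(B̃)` with `Ã, B̃` disjoint, let `q` be the
committor of the reversible chain from `A` to `B` and `q̃` the committor of the effective
dynamics from `Ã` to `B̃`. With rates given by the Dirichlet energies, `k_AB = E(q)` and
`k̃_{ÃB̃} = Ẽ(q̃) = E(q̃∘ξ)`, one has `k̃_{ÃB̃} = k_AB + E(q - q̃∘ξ)`; in particular
`k̃_{ÃB̃} ≥ k_AB`. Here `E(f) = ⟨(I-T)f, f⟩_μ` with `μ(dx) = π(x)dx` and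
`(Tf)(x) = ∫ p(x,y) f(y) dy`. -/
theorem effective_rate_decomposition {d k : ℕ}
    (p : (Fin d → ℝ) → (Fin d → ℝ) → ℝ) (π : (Fin d → ℝ) → ℝ)
    (ξ : (Fin d → ℝ) → (Fin k → ℝ)) (hξ_meas : Measurable ξ)
    (At Bt : Set (Fin k → ℝ)) (hAtBt : Disjoint At Bt)
    (hAt : MeasurableSet At) (hBt : MeasurableSet Bt)
    (hABc : ((At ∪ Bt)ᶜ).Nonempty)
    (hp_meas : Measurable (Function.uncurry p))
    (hπ_meas : Measurable π)
    (hp_pos : ∀ x y, 0 < p x y)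
    (hπ_pos : ∀ x, 0 < π x)
    (hπ_prob : ∫ x, π x = 1)
    (hp_norm : ∀ x, ∫ y, p x y = 1)
    (hp_inv : ∀ y, ∫ x, p x y * π x = π y)
    (hdb : ∀ x y, p x y * π x = p y x * π y)
    -- the committor q of the full dynamics from A = ξ⁻¹(Ã) to B = ξ⁻¹(B̃)
    (q : (Fin d → ℝ) → ℝ) (hq_meas : Measurable q)
    (hq2 : Integrable (fun x => q x ^ 2 * π x))
    (hq_comm : ∀ x, ξ x ∉ At ∪ Bt → (∫ y, p x y * q y) = q x)
    (hqA : ∀ x, ξ x ∈ At → q x = 0) (hqB : ∀ x, ξ x ∈ Bt → q x = 1)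
    -- the committor q̃ of the effective dynamics from Ã to B̃ (the minimizer of the
    -- effective Dirichlet energy Ẽ(f̃) = E(f̃∘ξ) subject to the boundary conditions)
    (qt : (Fin k → ℝ) → ℝ) (hqt_meas : Measurable qt)
    (hqt2 : Integrable (fun x => qt (ξ x) ^ 2 * π x))
    (hqtA : ∀ z ∈ At, qt z = 0) (hqtB : ∀ z ∈ Bt, qt z = 1)
    (hqt_min : ∀ g : (Fin k → ℝ) → ℝ, Measurable g →
      Integrable (fun x => g (ξ x) ^ 2 * π x) →
      (∀ z ∈ At, g z = 0) → (∀ z ∈ Bt, g z = 1) →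
      (∫ x, (qt (ξ x) - ∫ y, p x y * qt (ξ y)) * qt (ξ x) * π x)
        ≤ (∫ x, (g (ξ x) - ∫ y, p x y * g (ξ y)) * g (ξ x) * π x)) :
    ((∫ x, (qt (ξ x) - ∫ y, p x y * qt (ξ y)) * qt (ξ x) * π x)
        = (∫ x, (q x - ∫ y, p x y * q y) * q x * π x)
          + (∫ x, ((q x - qt (ξ x)) - ∫ y, p x y * (q y - qt (ξ y)))
              * (q x - qt (ξ x)) * π x)) ∧
    ((∫ x, (q x - ∫ y, p x y * q y) * q x * π x)
        ≤ (∫ x, (qt (ξ x) - ∫ y, p x y * qt (ξ y)) * qt (ξ x) * π x)) :=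
  effective_rate_decomposition_general p π ξ hξ_meas At Bt hp_meas hπ_meas hp_pos hπ_pos hp_norm hdb
    q hq_meas hq2 hq_comm hqA hqB qt hqt_meas hqt2 hqtA hqtB
end
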